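/- arXiv:1805.03185 — 7 statements merged into one kernel-verified Lean document; each statement's English description precedes it below -/
import Mathlib

section
/- Let X and Y be Polish spaces, μ a Borel probability measure on X, ν a Borel probability measure on Y, and P, P_n couplings of (μ, ν) (i.e., Borel probability measures on X × Y with marginals μ and ν) such that P_n converges weakly to P. Then for any bounded measurable functions f : X → ℝ and g : Y → ℝ, ∫ f(x)g(y) dP_n(x,y) → ∫ f(x)g(y) dP(x,y). -/
/-!
For a coupling `Q` of `(μ, ν)`, the identity `f ⊗ g - F ⊗ G = (f - F) ⊗ g + F ⊗ (g - G)` bounds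
`|∫ f ⊗ g dQ - ∫ F ⊗ G dQ|` by `‖g‖∞ ‖f - F‖_{L¹(μ)} + ‖F‖∞ ‖g - G‖_{L¹(ν)}`, uniformly in `Q`,
because the integrand of each error term depends on one coordinate only and the marginals are fixed.
Approximating `f` in `L¹(μ)` by a bounded continuous `F`, and then `g` in `L¹(ν)` by a bounded
continuous `G` to an accuracy depending on `‖F‖∞`, the integrals of
`f ⊗ g` are uniformly close to those of the bounded continuous function `F ⊗ G`, whose integrals
converge by weak convergence.
-/

open MeasureTheory Filter Topology BoundedContinuousFunction

lemma tendsto_of_forall_approx {α ι : Type*} [PseudoMetricSpace α] {l : Filter ι} {u : ι → α}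
    {a : α}
    (h : ∀ ε > 0, ∃ v : ι → α, ∃ b, Tendsto v l (𝓝 b) ∧ (∀ i, dist (u i) (v i) ≤ ε) ∧
      dist b a ≤ ε) :
    Tendsto u l (𝓝 a) := by
  refine Metric.tendsto_nhds.2 fun ε hε => ?_
  obtain ⟨v, b, hvb, huv, hba⟩ := h (ε / 4) (by positivity)
  filter_upwards [Metric.tendsto_nhds.1 hvb (ε / 4) (by positivity)] with i hi
  calc dist (u i) a ≤ dist (u i) (v i) + dist (v i) b + dist b a := dist_triangle4 _ _ _ _
    _ < ε := by linarith [huv i]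

lemma abs_mul_sub_mul_le (a b c d : ℝ) : |a * b - c * d| ≤ |a - c| * |b| + |c| * |b - d| := by
  calc |a * b - c * d| = |(a - c) * b + c * (b - d)| := by ring_nf
    _ ≤ |a - c| * |b| + |c| * |b - d| := by
      simpa only [abs_mul] using abs_add_le ((a - c) * b) (c * (b - d))

section Coupling

variable {X Y : Type*} [MeasurableSpace X] [MeasurableSpace Y] {Q : Measure (X × Y)}
  {μ : Measure X} {ν : Measure Y}

lemma integrable_mul_comp_fst_comp_snd [IsFiniteMeasure Q] {f : X → ℝ} {g : Y → ℝ} {Cf Cg : ℝ}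
    (hf : Measurable f) (hg : Measurable g) (hfC : ∀ x, |f x| ≤ Cf) (hgC : ∀ y, |g y| ≤ Cg) :
    Integrable (fun z => f z.1 * g z.2) Q :=
  .of_bound ((hf.comp measurable_fst).mul (hg.comp measurable_snd)).aestronglyMeasurable (Cf * Cg)
    (ae_of_all _ fun z => by
      rw [Real.norm_eq_abs, abs_mul]
      exact mul_le_mul (hfC z.1) (hgC z.2) (abs_nonneg _) ((abs_nonneg _).trans (hfC z.1)))

lemma abs_integral_mul_sub_integral_mul_le (hQ₁ : Q.map Prod.fst = μ)
    (hQ₂ : Q.map Prod.snd = ν) {f F : X → ℝ} {g G : Y → ℝ} {Cg CF : ℝ}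
    (hfg : Integrable (fun z => f z.1 * g z.2) Q) (hFG : Integrable (fun z => F z.1 * G z.2) Q)
    (hfF : Integrable (fun x => |f x - F x|) μ) (hgG : Integrable (fun y => |g y - G y|) ν)
    (hgC : ∀ y, |g y| ≤ Cg) (hFC : ∀ x, |F x| ≤ CF) :
    |∫ z, f z.1 * g z.2 ∂Q - ∫ z, F z.1 * G z.2 ∂Q|
      ≤ Cg * ∫ x, |f x - F x| ∂μ + CF * ∫ y, |g y - G y| ∂ν := by
  subst hQ₁ hQ₂
  have hfF' : Integrable (fun z : X × Y => Cg * |f z.1 - F z.1|) Q :=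
    (hfF.comp_measurable measurable_fst).const_mul Cg
  have hgG' : Integrable (fun z : X × Y => CF * |g z.2 - G z.2|) Q :=
    (hgG.comp_measurable measurable_snd).const_mul CF
  rw [← integral_sub hfg hFG,
    integral_map measurable_fst.aemeasurable hfF.aestronglyMeasurable,
    integral_map measurable_snd.aemeasurable hgG.aestronglyMeasurable,
    ← integral_const_mul, ← integral_const_mul, ← integral_add hfF' hgG']
  refine norm_integral_le_of_norm_le (G := ℝ) (hfF'.add hgG') (ae_of_all _ fun z => ?_)
  refine (abs_mul_sub_mul_le _ _ _ _).trans ?_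
  rw [mul_comm Cg]
  exact add_le_add (mul_le_mul_of_nonneg_left (hgC _) (abs_nonneg _))
    (mul_le_mul_of_nonneg_right (hFC _) (abs_nonneg _))

end Coupling

section Approximation

variable {X Y : Type*} [TopologicalSpace X] [NormalSpace X] [MeasurableSpace X] [BorelSpace X]
  [TopologicalSpace Y] [NormalSpace Y] [MeasurableSpace Y] [BorelSpace Y]
  {μ : Measure X} {ν : Measure Y}

lemma MeasureTheory.Integrable.exists_boundedContinuous_mul_integral_abs_sub_le [μ.WeaklyRegular]
    {f : X → ℝ} (hf : Integrable f μ) (C : ℝ) {ε : ℝ} (hε : 0 < ε) :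
    ∃ F : X →ᵇ ℝ, C * ∫ x, |f x - F x| ∂μ ≤ ε := by
  obtain ⟨F, hF, -⟩ := hf.exists_boundedContinuous_integral_sub_le (ε := ε / (|C| + 1))
    (by positivity)
  refine ⟨F, ?_⟩
  calc C * ∫ x, |f x - F x| ∂μ ≤ (|C| + 1) * ∫ x, |f x - F x| ∂μ :=
        mul_le_mul_of_nonneg_right (by linarith [le_abs_self C])
          (integral_nonneg fun _ => abs_nonneg _)
    _ ≤ (|C| + 1) * (ε / (|C| + 1)) := mul_le_mul_of_nonneg_left hF (by positivity)
    _ = ε := mul_div_cancel₀ _ (by positivity)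

lemma exists_boundedContinuous_forall_coupling_abs_integral_mul_sub_le [IsFiniteMeasure μ]
    [μ.WeaklyRegular] [IsFiniteMeasure ν] [ν.WeaklyRegular] {f : X → ℝ} {g : Y → ℝ}
    {Cf Cg : ℝ} (hf : Measurable f) (hg : Measurable g) (hfC : ∀ x, |f x| ≤ Cf)
    (hgC : ∀ y, |g y| ≤ Cg) {ε : ℝ} (hε : 0 < ε) :
    ∃ (F : X →ᵇ ℝ) (G : Y →ᵇ ℝ), ∀ (Q : Measure (X × Y)) [IsFiniteMeasure Q],
      Q.map Prod.fst = μ → Q.map Prod.snd = ν →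
        |∫ z, f z.1 * g z.2 ∂Q - ∫ z, F z.1 * G z.2 ∂Q| ≤ ε := by
  have hfμ : Integrable f μ := .of_bound hf.aestronglyMeasurable Cf (ae_of_all _ hfC)
  have hgν : Integrable g ν := .of_bound hg.aestronglyMeasurable Cg (ae_of_all _ hgC)
  obtain ⟨F, hF⟩ := hfμ.exists_boundedContinuous_mul_integral_abs_sub_le Cg (half_pos hε)
  obtain ⟨G, hG⟩ := hgν.exists_boundedContinuous_mul_integral_abs_sub_le ‖F‖ (half_pos hε)
  refine ⟨F, G, fun Q _ hQ₁ hQ₂ => ?_⟩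
  calc |∫ z, f z.1 * g z.2 ∂Q - ∫ z, F z.1 * G z.2 ∂Q|
      ≤ Cg * ∫ x, |f x - F x| ∂μ + ‖F‖ * ∫ y, |g y - G y| ∂ν :=
        abs_integral_mul_sub_integral_mul_le hQ₁ hQ₂
          (integrable_mul_comp_fst_comp_snd hf hg hfC hgC)
          (integrable_mul_comp_fst_comp_snd F.continuous.measurable G.continuous.measurable
            F.norm_coe_le_norm G.norm_coe_le_norm)
          (hfμ.sub (F.integrable μ)).abs (hgν.sub (G.integrable ν)).abs hgC F.norm_coe_le_norm
    _ ≤ ε := by linarith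

end Approximation

lemma ProbabilityMeasure.tendsto_integral_mul_of_tendsto {X Y ι : Type*} [TopologicalSpace X]
    [TopologicalSpace Y] [MeasurableSpace (X × Y)] [OpensMeasurableSpace (X × Y)]
    {l : Filter ι} {P : ProbabilityMeasure (X × Y)} {Ps : ι → ProbabilityMeasure (X × Y)}
    (h : Tendsto Ps l (𝓝 P)) (F : X →ᵇ ℝ) (G : Y →ᵇ ℝ) :
    Tendsto (fun i => ∫ z, F z.1 * G z.2 ∂(Ps i : Measure (X × Y))) l
      (𝓝 (∫ z, F z.1 * G z.2 ∂(P : Measure (X × Y)))) :=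
  ProbabilityMeasure.tendsto_iff_forall_integral_tendsto.1 h
    (F.compContinuous ⟨Prod.fst, continuous_fst⟩ * G.compContinuous ⟨Prod.snd, continuous_snd⟩)

/-- Lemma 2.5: for couplings of `(μ, ν)` converging weakly, integrals of products
`f(x) g(y)` of bounded measurable functions converge. -/
theorem stmt1 {X Y : Type*}
    [TopologicalSpace X] [PolishSpace X] [MeasurableSpace X] [BorelSpace X]
    [TopologicalSpace Y] [PolishSpace Y] [MeasurableSpace Y] [BorelSpace Y]
    (μ : ProbabilityMeasure X) (ν : ProbabilityMeasure Y)
    (P : ProbabilityMeasure (X × Y)) (Pn : ℕ → ProbabilityMeasure (X × Y))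
    (hP1 : (P : Measure (X × Y)).map Prod.fst = (μ : Measure X))
    (hP2 : (P : Measure (X × Y)).map Prod.snd = (ν : Measure Y))
    (hPn1 : ∀ n, ((Pn n : Measure (X × Y))).map Prod.fst = (μ : Measure X))
    (hPn2 : ∀ n, ((Pn n : Measure (X × Y))).map Prod.snd = (ν : Measure Y))
    (hconv : Tendsto Pn atTop (𝓝 P))
    (f : X → ℝ) (g : Y → ℝ)
    (hf : Measurable f) (hfb : ∃ C, ∀ x, |f x| ≤ C)
    (hg : Measurable g) (hgb : ∃ C, ∀ y, |g y| ≤ C) :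
    Tendsto (fun n => ∫ z, f z.1 * g z.2 ∂(Pn n : Measure (X × Y))) atTop
      (𝓝 (∫ z, f z.1 * g z.2 ∂(P : Measure (X × Y)))) := by
  obtain ⟨Cf, hfC⟩ := hfb
  obtain ⟨Cg, hgC⟩ := hgb
  refine tendsto_of_forall_approx fun ε hε => ?_
  obtain ⟨F, G, hFG⟩ := exists_boundedContinuous_forall_coupling_abs_integral_mul_sub_le
    (μ := (μ : Measure X)) (ν := (ν : Measure Y)) hf hg hfC hgC hε
  refine ⟨_, _, ProbabilityMeasure.tendsto_integral_mul_of_tendsto hconv F G, fun n => ?_, ?_⟩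
  · exact hFG _ (hPn1 n) (hPn2 n)
  · rw [dist_comm]
    exact hFG _ hP1 hP2
end

section
/- Let X and Y be Polish spaces, μ a nonatomic Borel probability measure on X, and ν a Borel probability measure on Y. Then the set Π₀(μ,ν) of Monge couplings — measures of the form μ(dx) δ_{φ(x)}(dy) with φ : X → Y Borel measurable and μ ∘ φ⁻¹ = ν — is dense in the set Π(μ,ν) of all couplings of (μ,ν) with respect to the topology of weak convergence. -/
/-!
Partition `X` into countably many Borel pieces `A n` of diameter at most `δ`. On each piece the
nonatomic measure `μ|A n` can be pushed onto the `Y`-marginal of `P|(A n × Y)` by a Borel map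
(embed both spaces into `ℝ` and use `quantile ∘ cdf`), and gluing these maps gives a Monge coupling
that agrees with `P` on every rectangle `A n × T`. Two measures agreeing on all such rectangles are
within Lévy–Prokhorov distance `δ`, and the Lévy–Prokhorov metric metrizes weak convergence.
-/

open MeasureTheory Filter Topology Set ProbabilityTheory Function

section Quantile

-- The value off `(0, 1)` is a junk value: only the uniform law on `(0, 1)` is ever pushed forward.
noncomputable def quantile (ν : Measure ℝ) (t : ℝ) : ℝ :=
  if t ∈ Ioo 0 1 then sInf {x | t ≤ cdf ν x} else 0

variable {μ ν : Measure ℝ}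

theorem quantile_le_iff {t x : ℝ} (ht : t ∈ Ioo 0 1) : quantile ν t ≤ x ↔ t ≤ cdf ν x := by
  have hne : {x | t ≤ cdf ν x}.Nonempty :=
    ((tendsto_cdf_atTop ν).eventually (eventually_ge_nhds ht.2)).exists
  have hbdd : BddBelow {x | t ≤ cdf ν x} := by
    obtain ⟨z, hz⟩ := ((tendsto_cdf_atBot ν).eventually (eventually_lt_nhds ht.1)).exists
    exact ⟨z, fun x hx => le_of_not_gt fun hxz => (monotone_cdf ν hxz.le).trans_lt hz |>.not_ge hx⟩
  rw [quantile, if_pos ht]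
  refine ⟨fun h => ?_, fun h => csInf_le hbdd h⟩
  refine ge_of_tendsto ((cdf ν).right_continuous x |>.mono Ioi_subset_Ici_self) ?_
  filter_upwards [self_mem_nhdsWithin] with u hu
  obtain ⟨s, hs, hsu⟩ := exists_lt_of_csInf_lt hne (h.trans_lt hu)
  exact hs.trans (monotone_cdf ν hsu.le)

theorem measurable_quantile : Measurable (quantile ν) := by
  refine measurable_of_Iic fun x => ?_
  have : quantile ν ⁻¹' Iic x = Ioo 0 1 ∩ Iic (cdf ν x) ∪ (Ioo 0 1)ᶜ ∩ {_t | 0 ≤ x} := by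
    ext t
    by_cases ht : t ∈ Ioo 0 1
    · simp [quantile_le_iff ht, ht]
    · simp [quantile, ht]
  rw [this]
  exact (measurableSet_Ioo.inter measurableSet_Iic).union
    (measurableSet_Ioo.compl.inter (MeasurableSet.const _))

theorem volume_Iic_inter_Ioo_zero_one {a : ℝ} (ha : a ∈ Icc 0 1) :
    volume (Iic a ∩ Ioo 0 1) = ENNReal.ofReal a := by
  refine le_antisymm ?_ ?_
  · calc volume (Iic a ∩ Ioo 0 1) ≤ volume (Ioc 0 a) :=
          measure_mono fun t ht => ⟨ht.2.1, ht.1⟩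
      _ = ENNReal.ofReal a := by simp
  · calc ENNReal.ofReal a = volume (Ioo 0 a) := by simp
      _ ≤ volume (Iic a ∩ Ioo 0 1) :=
          measure_mono fun t ht => ⟨ht.2.le, ht.1, ht.2.trans_le ha.2⟩

theorem map_quantile_volume_restrict_Ioo [IsProbabilityMeasure ν] :
    (volume.restrict (Ioo 0 1)).map (quantile ν) = ν := by
  have : IsProbabilityMeasure (volume.restrict (Ioo (0 : ℝ) 1)) := ⟨by simp⟩
  have := Measure.isProbabilityMeasure_map (μ := volume.restrict (Ioo (0 : ℝ) 1))
    (measurable_quantile (ν := ν)).aemeasurable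
  refine Measure.ext_of_Iic _ _ fun x => ?_
  have hpre : quantile ν ⁻¹' Iic x ∩ Ioo 0 1 = Iic (cdf ν x) ∩ Ioo 0 1 := by
    ext t
    simp only [mem_inter_iff, mem_preimage, mem_Iic, and_congr_left_iff]
    exact quantile_le_iff
  rw [Measure.map_apply measurable_quantile measurableSet_Iic,
    Measure.restrict_apply (measurable_quantile measurableSet_Iic), hpre,
    volume_Iic_inter_Ioo_zero_one ⟨cdf_nonneg ν x, cdf_le_one ν x⟩, ofReal_cdf]

theorem continuous_cdf [IsProbabilityMeasure μ] [NullSingletonClass μ] : Continuous (cdf μ) := by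
  refine continuous_iff_continuousAt.2 fun x => continuousAt_iff_continuous_left_right.2
    ⟨?_, (cdf μ).right_continuous x⟩
  rw [← continuousWithinAt_Iio_iff_Iic, (monotone_cdf μ).continuousWithinAt_Iio_iff_leftLim_eq]
  have h := (cdf μ).measure_singleton x
  rw [measure_cdf, measure_singleton, eq_comm, ENNReal.ofReal_eq_zero, sub_nonpos] at h
  exact le_antisymm ((monotone_cdf μ).leftLim_le le_rfl) h

theorem measure_cdf_le_eq [IsProbabilityMeasure μ] [NullSingletonClass μ] {a : ℝ}
    (ha : a ∈ Ico 0 1) : μ {z | cdf μ z ≤ a} = ENNReal.ofReal a := by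
  set S := {z | cdf μ z ≤ a}
  rcases S.eq_empty_or_nonempty with hS | hS
  · have : a = 0 := by
      refine le_antisymm (le_of_not_gt fun ha0 => ?_) ha.1
      obtain ⟨z, hz⟩ := ((tendsto_cdf_atBot μ).eventually (eventually_lt_nhds ha0)).exists
      exact hS.subset (show z ∈ S from hz.le)
    simp [hS, this]
  have hclosed : IsClosed S := isClosed_le continuous_cdf continuous_const
  have hbdd : BddAbove S := by
    obtain ⟨z, hz⟩ := ((tendsto_cdf_atTop μ).eventually (eventually_gt_nhds ha.2)).exists
    exact ⟨z, fun x hx => le_of_not_gt fun hzx => ((monotone_cdf μ hzx.le).trans hx).not_gt hz⟩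
  have hS_eq : S = Iic (sSup S) := Subset.antisymm (fun x hx => le_csSup hbdd hx)
    fun x hx => (monotone_cdf μ hx).trans (hclosed.csSup_mem hS hbdd)
  have hs : cdf μ (sSup S) = a := by
    refine le_antisymm (hclosed.csSup_mem hS hbdd) (ge_of_tendsto
      (continuous_cdf.tendsto _ |>.mono_left (nhdsWithin_le_nhds (s := Ioi (sSup S)))) ?_)
    filter_upwards [self_mem_nhdsWithin (s := Ioi (sSup S))] with u hu
    exact le_of_lt (not_le.1 fun hua => (not_le.2 hu) (le_csSup hbdd hua))
  rw [hS_eq, ← ofReal_cdf, hs]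

theorem map_cdf_eq_volume_restrict_Ioo [IsProbabilityMeasure μ] [NullSingletonClass μ] :
    μ.map (cdf μ) = volume.restrict (Ioo 0 1) := by
  have hF : Measurable (cdf μ) := continuous_cdf.measurable
  have := Measure.isProbabilityMeasure_map (μ := μ) hF.aemeasurable
  refine Measure.ext_of_Iic _ _ fun a => ?_
  rw [Measure.map_apply hF measurableSet_Iic, Measure.restrict_apply measurableSet_Iic]
  rcases lt_or_ge a 0 with ha0 | ha0
  · have h1 : cdf μ ⁻¹' Iic a = ∅ :=
      eq_empty_of_forall_notMem fun z hz => (cdf_nonneg μ z).not_gt (lt_of_le_of_lt hz ha0)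
    have h2 : Iic a ∩ Ioo 0 1 = ∅ :=
      eq_empty_of_forall_notMem fun t ht => ht.2.1.not_ge (ht.1.trans ha0.le)
    simp [h1, h2]
  rcases lt_or_ge a 1 with ha1 | ha1
  · exact (measure_cdf_le_eq ⟨ha0, ha1⟩).trans (volume_Iic_inter_Ioo_zero_one ⟨ha0, ha1.le⟩).symm
  · have h1 : cdf μ ⁻¹' Iic a = univ := eq_univ_of_forall fun z => (cdf_le_one μ z).trans ha1
    have h2 : Iic a ∩ Ioo 0 1 = Ioo 0 1 := inter_eq_right.2 fun t ht => ht.2.le.trans ha1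
    simp [h1, h2]

theorem map_quantile_comp_cdf [IsProbabilityMeasure μ] [NullSingletonClass μ]
    [IsProbabilityMeasure ν] : μ.map (quantile ν ∘ cdf μ) = ν := by
  rw [← Measure.map_map measurable_quantile continuous_cdf.measurable,
    map_cdf_eq_volume_restrict_Ioo, map_quantile_volume_restrict_Ioo]

end Quantile

section Transport

variable {X Y : Type*} [MeasurableSpace X] [MeasurableSpace Y]

theorem nullSingletonClass_map_of_injective [MeasurableSingletonClass Y] {μ : Measure X}
    [NullSingletonClass μ] {f : X → Y} (hf : Measurable f) (hinj : Injective f) :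
    NullSingletonClass (μ.map f) :=
  ⟨fun y => by
    rw [Measure.map_apply hf (measurableSet_singleton y)]
    exact (subsingleton_singleton.preimage hinj).measure_zero μ⟩

variable [StandardBorelSpace X] [StandardBorelSpace Y]

theorem exists_measurable_map_eq_of_nullSingletonClass (μ : Measure X) (ν : Measure Y)
    [IsProbabilityMeasure μ] [NullSingletonClass μ] [IsProbabilityMeasure ν] :
    ∃ φ : X → Y, Measurable φ ∧ μ.map φ = ν := by
  have := nonempty_of_isProbabilityMeasure ν
  obtain ⟨e, he⟩ := exists_measurableEmbedding_real X
  obtain ⟨j, hj⟩ := exists_measurableEmbedding_real Y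
  obtain ⟨g, hg, hgj⟩ := hj.exists_measurable_extend measurable_id fun _ => ‹Nonempty Y›
  have := Measure.isProbabilityMeasure_map (μ := μ) he.measurable.aemeasurable
  have := Measure.isProbabilityMeasure_map (μ := ν) hj.measurable.aemeasurable
  have := nullSingletonClass_map_of_injective (μ := μ) he.measurable he.injective
  have hq : Measurable (quantile (ν.map j) ∘ cdf (μ.map e)) :=
    measurable_quantile.comp continuous_cdf.measurable
  refine ⟨g ∘ (quantile (ν.map j) ∘ cdf (μ.map e)) ∘ e, hg.comp (hq.comp he.measurable), ?_⟩
  rw [← Measure.map_map hg (hq.comp he.measurable), ← Measure.map_map hq he.measurable,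
    map_quantile_comp_cdf, Measure.map_map hg hj.measurable, hgj, Measure.map_id]

theorem exists_measurable_map_eq_of_measure_univ_eq [Nonempty Y] (μ : Measure X) (ν : Measure Y)
    [IsFiniteMeasure μ] [NullSingletonClass μ] [IsFiniteMeasure ν] (h : μ univ = ν univ) :
    ∃ φ : X → Y, Measurable φ ∧ μ.map φ = ν := by
  rcases eq_or_ne (μ univ) 0 with h0 | h0
  · refine ⟨fun _ => Classical.arbitrary Y, measurable_const, ?_⟩
    rw [Measure.measure_univ_eq_zero.1 h0, Measure.measure_univ_eq_zero.1 (h ▸ h0 : ν univ = 0),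
      Measure.map_zero]
  have hc : μ univ ≠ ⊤ := measure_ne_top μ univ
  have : IsProbabilityMeasure ((μ univ)⁻¹ • μ) := ⟨by simp [ENNReal.inv_mul_cancel h0 hc]⟩
  have : IsProbabilityMeasure ((μ univ)⁻¹ • ν) :=
    ⟨by simp [← h, ENNReal.inv_mul_cancel h0 hc]⟩
  have : NullSingletonClass ((μ univ)⁻¹ • μ) := ⟨fun x => by simp⟩
  obtain ⟨φ, hφ, hmap⟩ := exists_measurable_map_eq_of_nullSingletonClass
    ((μ univ)⁻¹ • μ) ((μ univ)⁻¹ • ν)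
  refine ⟨φ, hφ, ?_⟩
  rw [Measure.map_smul] at hmap
  simpa [smul_smul, ENNReal.mul_inv_cancel h0 hc] using congrArg (μ univ • ·) hmap

end Transport

section Strips

variable {X Y : Type*} [MeasurableSpace X] [MeasurableSpace Y] {A : ℕ → Set X}

theorem measure_eq_tsum_inter_prod_univ (hA : ∀ n, MeasurableSet (A n)) (hAU : ⋃ n, A n = univ)
    (hAd : Pairwise (Disjoint on A)) (ρ : Measure (X × Y)) {s : Set (X × Y)}
    (hs : MeasurableSet s) : ρ s = ∑' n, ρ (s ∩ A n ×ˢ univ) := by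
  conv_lhs => rw [← inter_univ s, ← univ_prod_univ, ← hAU, iUnion_prod_const, inter_iUnion]
  exact measure_iUnion (fun i j hij => (disjoint_prod.2 (Or.inl (hAd hij))).mono
    inter_subset_right inter_subset_right) fun n => hs.inter ((hA n).prod MeasurableSet.univ)

theorem map_snd_eq_of_forall_measure_prod_eq (hA : ∀ n, MeasurableSet (A n))
    (hAU : ⋃ n, A n = univ) (hAd : Pairwise (Disjoint on A)) {ρ σ : Measure (X × Y)}
    (h : ∀ n T, MeasurableSet T → ρ (A n ×ˢ T) = σ (A n ×ˢ T)) :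
    ρ.map Prod.snd = σ.map Prod.snd := by
  ext T hT
  have hstrips : ∀ κ : Measure (X × Y), κ.map Prod.snd T = ∑' n, κ (A n ×ˢ T) := fun κ => by
    rw [Measure.map_apply measurable_snd hT,
      measure_eq_tsum_inter_prod_univ hA hAU hAd κ (measurable_snd hT)]
    refine tsum_congr fun n => congrArg κ ?_
    ext
    simp [and_comm]
  simp only [hstrips, h _ _ hT]

theorem exists_measurable_map_graph_prod_eq [StandardBorelSpace X] [StandardBorelSpace Y]
    [Nonempty Y] (hA : ∀ n, MeasurableSet (A n)) (hAd : Pairwise (Disjoint on A))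
    {μ : Measure X} [IsFiniteMeasure μ] [NullSingletonClass μ] {P : Measure (X × Y)}
    [IsFiniteMeasure P] (hP : P.map Prod.fst = μ) :
    ∃ φ : X → Y, Measurable φ ∧
      ∀ n T, MeasurableSet T → μ.map (fun x => (x, φ x)) (A n ×ˢ T) = P (A n ×ˢ T) := by
  have hstrip : ∀ n, ∃ φ : X → Y, Measurable φ ∧
      (μ.restrict (A n)).map φ = (P.restrict (A n ×ˢ univ)).map Prod.snd := fun n =>
    exists_measurable_map_eq_of_measure_univ_eq _ _ <| by
      rw [Measure.map_apply measurable_snd MeasurableSet.univ, Measure.restrict_apply_univ,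
        Measure.restrict_apply (measurable_snd MeasurableSet.univ), ← hP,
        Measure.map_apply measurable_fst (hA n)]
      congr 1
      ext
      simp
  choose φ hφ hφmap using hstrip
  obtain ⟨ψ, hψ, hψφ⟩ := exists_measurable_piecewise A hA φ hφ fun i j hij x hx =>
    ((hAd hij).ne_of_mem hx.1 hx.2 rfl).elim
  refine ⟨ψ, hψ, fun n T hT => ?_⟩
  calc μ.map (fun x => (x, ψ x)) (A n ×ˢ T) = μ (φ n ⁻¹' T ∩ A n) := by
        rw [Measure.map_apply (measurable_id'.prodMk hψ) ((hA n).prod hT)]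
        congr 1
        ext x
        simp only [mem_preimage, mem_prod, mem_inter_iff, and_comm, and_congr_right_iff]
        intro hx
        rw [hψφ n hx]
    _ = (μ.restrict (A n)).map (φ n) T := by
        rw [Measure.map_apply (hφ n) hT, Measure.restrict_apply (hφ n hT)]
    _ = P (A n ×ˢ T) := by
        rw [hφmap, Measure.map_apply measurable_snd hT,
          Measure.restrict_apply (measurable_snd hT)]
        congr 1
        ext
        simp [and_comm]

end Strips

section LevyProkhorov

open Metric

variable {X Y : Type*} [MeasurableSpace X] [MeasurableSpace Y] [PseudoMetricSpace X]
  [PseudoMetricSpace Y] [OpensMeasurableSpace Y] [OpensMeasurableSpace (X × Y)]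
  {A : ℕ → Set X} {δ : ℝ}

-- The projection of `B ∩ A n ×ˢ univ` need not be measurable; its substitute `R n` is open.
theorem measure_le_measure_thickening_of_forall_measure_prod_eq (hA : ∀ n, MeasurableSet (A n))
    (hAU : ⋃ n, A n = univ) (hAd : Pairwise (Disjoint on A))
    (hAb : ∀ n, Bornology.IsBounded (A n)) (hAδ : ∀ n, diam (A n) ≤ δ) {ρ σ : Measure (X × Y)}
    (h : ∀ n T, MeasurableSet T → ρ (A n ×ˢ T) = σ (A n ×ˢ T)) {ε : ℝ} (hδε : δ < ε)
    {B : Set (X × Y)} (hB : MeasurableSet B) : ρ B ≤ σ (thickening ε B) := by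
  set R : ℕ → Set Y := fun n => ⋃ x ∈ A n, Prod.mk x ⁻¹' thickening (ε - δ) B
  have hR : ∀ n, IsOpen (R n) := fun n =>
    isOpen_biUnion fun x _ => isOpen_thickening.preimage (Continuous.prodMk_right x)
  have hsub₁ : ∀ n, B ∩ A n ×ˢ univ ⊆ A n ×ˢ R n := by
    rintro n ⟨x, y⟩ ⟨hxy, hx, -⟩
    exact ⟨hx, mem_biUnion hx (self_subset_thickening (sub_pos.2 hδε) B hxy)⟩
  have hsub₂ : ∀ n, A n ×ˢ R n ⊆ thickening ε B ∩ A n ×ˢ univ := by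
    rintro n ⟨x', y⟩ ⟨hx', hy⟩
    obtain ⟨x, hx, hxy⟩ := mem_iUnion₂.1 hy
    obtain ⟨z, hz, hdist⟩ := mem_thickening_iff.1 hxy
    refine ⟨mem_thickening_iff.2 ⟨z, hz, ?_⟩, hx', trivial⟩
    calc dist (x', y) z ≤ dist (x', y) (x, y) + dist (x, y) z := dist_triangle _ _ _
      _ < δ + (ε - δ) := by
        refine add_lt_add_of_le_of_lt ?_ hdist
        simpa [Prod.dist_eq] using (dist_le_diam_of_mem (hAb n) hx' hx).trans (hAδ n)
      _ = ε := by ring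
  calc ρ B = ∑' n, ρ (B ∩ A n ×ˢ univ) := measure_eq_tsum_inter_prod_univ hA hAU hAd ρ hB
    _ ≤ ∑' n, σ (thickening ε B ∩ A n ×ˢ univ) := ENNReal.tsum_le_tsum fun n =>
      calc ρ (B ∩ A n ×ˢ univ) ≤ ρ (A n ×ˢ R n) := measure_mono (hsub₁ n)
        _ = σ (A n ×ˢ R n) := h n _ (hR n).measurableSet
        _ ≤ σ (thickening ε B ∩ A n ×ˢ univ) := measure_mono (hsub₂ n)
    _ = σ (thickening ε B) :=
      (measure_eq_tsum_inter_prod_univ hA hAU hAd σ isOpen_thickening.measurableSet).symm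

theorem levyProkhorovEDist_le_of_forall_measure_prod_eq (hA : ∀ n, MeasurableSet (A n))
    (hAU : ⋃ n, A n = univ) (hAd : Pairwise (Disjoint on A))
    (hAb : ∀ n, Bornology.IsBounded (A n)) (hAδ : ∀ n, diam (A n) ≤ δ) {ρ σ : Measure (X × Y)}
    (h : ∀ n T, MeasurableSet T → ρ (A n ×ˢ T) = σ (A n ×ˢ T)) :
    levyProkhorovEDist ρ σ ≤ ENNReal.ofReal δ := by
  refine levyProkhorovEDist_le_of_forall _ _ _ fun ε B hε hε_top hB => ?_
  have hδε : δ < ε.toReal :=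
    (ENNReal.ofReal_lt_iff_lt_toReal (diam_nonneg.trans (hAδ 0)) hε_top.ne).1 hε
  constructor <;> refine (measure_le_measure_thickening_of_forall_measure_prod_eq hA hAU hAd hAb
    hAδ ?_ hδε hB).trans le_self_add
  exacts [h, fun n T hT => (h n T hT).symm]

theorem ProbabilityMeasure.mem_closure_of_forall_levyProkhorovEDist_le {Ω : Type*}
    [PseudoMetricSpace Ω] [TopologicalSpace.SeparableSpace Ω] [MeasurableSpace Ω]
    [OpensMeasurableSpace Ω]
    {S : Set (ProbabilityMeasure Ω)} {P : ProbabilityMeasure Ω}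
    (h : ∀ δ : ℝ, 0 < δ → ∃ Q ∈ S, levyProkhorovEDist (P : Measure Ω) Q ≤ ENNReal.ofReal δ) :
    P ∈ closure S := by
  let e := LevyProkhorov.probabilityMeasureHomeomorph (Ω := Ω)
  rw [e.isInducing.closure_eq_preimage_closure_image, mem_preimage, EMetric.mem_closure_iff]
  intro ε hε
  obtain ⟨δ, -, hδ, hδε⟩ := ENNReal.lt_iff_exists_real_btwn.1 hε
  obtain ⟨Q, hQ, hPQ⟩ := h δ (ENNReal.ofReal_pos.1 hδ)
  exact ⟨e Q, mem_image_of_mem e hQ, hPQ.trans_lt hδε⟩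

end LevyProkhorov

/-- Proposition 2.8: if `μ` is nonatomic, the Monge couplings `Π₀(μ,ν)` are weakly dense
in the set `Π(μ,ν)` of all couplings of `(μ,ν)`. -/
theorem stmt3 {X Y : Type*}
    [TopologicalSpace X] [PolishSpace X] [MeasurableSpace X] [BorelSpace X]
    [TopologicalSpace Y] [PolishSpace Y] [MeasurableSpace Y] [BorelSpace Y]
    (μ : ProbabilityMeasure X) (ν : ProbabilityMeasure Y)
    (hμ : ∀ x : X, (μ : Measure X) {x} = 0)
    (P : ProbabilityMeasure (X × Y))
    (h1 : (P : Measure (X × Y)).map Prod.fst = (μ : Measure X))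
    (h2 : (P : Measure (X × Y)).map Prod.snd = (ν : Measure Y)) :
    P ∈ closure {Q : ProbabilityMeasure (X × Y) |
      ∃ φ : X → Y, Measurable φ ∧ (μ : Measure X).map φ = (ν : Measure Y) ∧
        (Q : Measure (X × Y)) = (μ : Measure X).map (fun x => (x, φ x))} := by
  let := TopologicalSpace.upgradeIsCompletelyMetrizable X
  let := TopologicalSpace.upgradeIsCompletelyMetrizable Y
  have : NullSingletonClass (μ : Measure X) := ⟨hμ⟩
  have := nonempty_of_isProbabilityMeasure (ν : Measure Y)
  refine ProbabilityMeasure.mem_closure_of_forall_levyProkhorovEDist_le fun δ hδ => ?_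
  obtain ⟨A, hA, hAb, hAδ, hAU, hAd⟩ := SeparableSpace.exists_measurable_partition_diam_le X hδ
  obtain ⟨φ, hφ, hφP⟩ := exists_measurable_map_graph_prod_eq hA hAd h1
  have hgraph : Measurable fun x => (x, φ x) := measurable_id'.prodMk hφ
  refine ⟨⟨_, Measure.isProbabilityMeasure_map hgraph.aemeasurable⟩, ⟨φ, hφ, ?_, rfl⟩,
    levyProkhorovEDist_le_of_forall_measure_prod_eq hA hAU hAd hAb hAδ
      fun n T hT => (hφP n T hT).symm⟩
  rw [← h2, ← map_snd_eq_of_forall_measure_prod_eq hA hAU hAd hφP,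
    Measure.map_map measurable_snd hgraph]
  rfl
end

section
/- Let (Ω, F, P) be a probability space with filtrations F = (F_t)_{t≥0} and G = (G_t)_{t≥0}, and let H be a sub-σ-field. Let T ⊂ [0,∞) be dense. If for every t ∈ T, F_t is conditionally independent of H given G_t, then for every t ∈ [0,∞), the right-continuous σ-field F_{t+} = ∩_{s>t} F_s is conditionally independent of H given G_{t+} = ∩_{s>t} G_s. -/
/-! Choose `uₙ ∈ T` decreasing to `t`, so that `G_{t+} = ⨅ₙ G_{uₙ}`. Conditional independence of
`m₁` and `m₂` given `m` says that `∫_{C ∩ B} E[1_A | m] = ∫_{C ∩ B} 1_A` for all `A ∈ m₁`, `B ∈ m₂`,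
`C ∈ m`. For `C ∈ G_{t+}` this holds with `m = G_{uₙ}` for every `n`, and the left-hand side
converges to the one for `G_{t+}` (backward martingale convergence): in `L²`, conditional
expectation given `m` is the orthogonal projection onto `L²(m)`, projections onto a decreasing
sequence of closed subspaces converge to the projection onto their intersection, and
`⨅ₙ L²(G_{uₙ}) = L²(G_{t+})`. -/

open MeasureTheory Filter Topology

/-- Conditional independence of `m₁` and `m₂` given `m` under `μ`:
`E[1_{A∩B} | m] = E[1_A | m] E[1_B | m]` a.s. for all `A ∈ m₁`, `B ∈ m₂`. -/
def CondIndepGiven {Ω : Type*} {mΩ : MeasurableSpace Ω} (μ : Measure Ω)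
    (m₁ m₂ m : MeasurableSpace Ω) : Prop :=
  ∀ A B : Set Ω, MeasurableSet[m₁] A → MeasurableSet[m₂] B →
    μ[(A ∩ B).indicator (fun _ => (1 : ℝ)) | m] =ᵐ[μ]
      μ[A.indicator (fun _ => (1 : ℝ)) | m] * μ[B.indicator (fun _ => (1 : ℝ)) | m]

open scoped ENNReal

namespace Submodule

variable {𝕜 E : Type*} [RCLike 𝕜] [NormedAddCommGroup E] [InnerProductSpace 𝕜 E] [CompleteSpace E]

theorem starProjection_tendsto_iInf {ι : Type*} [Preorder ι] (U : ι → Submodule 𝕜 E)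
    [∀ i, (U i).HasOrthogonalProjection] [(⨅ i, U i).HasOrthogonalProjection]
    (hU : Antitone U) (x : E) :
    Tendsto (fun i => (U i).starProjection x) atTop (𝓝 ((⨅ i, U i).starProjection x)) := by
  have hclosure : (⨆ i, (U i)ᗮ).topologicalClosure = (⨅ i, U i)ᗮ := by
    simp only [← orthogonal_orthogonal_eq_closure, ← iInf_orthogonal, orthogonal_orthogonal]
  have : (⨆ i, (U i)ᗮ).topologicalClosure.HasOrthogonalProjection := by
    rw [hclosure]; infer_instance
  have hperp := starProjection_tendsto_closure_iSup (fun i => (U i)ᗮ)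
    (fun i j hij => orthogonal_le (hU hij)) x
  simp only [hclosure, starProjection_orthogonal_val] at hperp
  simpa using (tendsto_const_nhds (x := x)).sub hperp

end Submodule

namespace MeasureTheory

variable {Ω : Type*} {m mΩ : MeasurableSpace Ω} {μ : Measure Ω}

theorem AEStronglyMeasurable.iInf_of_antitone {m : ℕ → MeasurableSpace Ω} (hm : Antitone m)
    {f : Ω → ℝ} (hf : ∀ n, AEStronglyMeasurable[m n] f μ) :
    AEStronglyMeasurable[⨅ n, m n] f μ := by
  choose g hg hfg using hf
  -- `liminf` does not see finitely many terms, so it is `m N`-measurable for every `N`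
  set g' : Ω → ℝ := fun ω => liminf (fun k => g k ω) atTop
  have hmeas : ∀ N, Measurable[m N] g' := fun N => by
    have : g' = fun ω => liminf (fun k => g (k + N) ω) atTop :=
      funext fun ω => (liminf_nat_add _ N).symm
    rw [this]
    exact .liminf fun k => (hg (k + N)).measurable.mono (hm (Nat.le_add_left N k)) le_rfl
  have hmeas' : Measurable[⨅ n, m n] g' := fun s hs =>
    MeasurableSpace.measurableSet_iInf.2 fun N => hmeas N hs
  refine ⟨g', hmeas'.stronglyMeasurable, ?_⟩
  filter_upwards [ae_all_iff.2 hfg] with ω hω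
  simp [g', ← hω]

theorem lpMeas_mono {F 𝕜 : Type*} [RCLike 𝕜] [NormedAddCommGroup F] [NormedSpace 𝕜 F]
    {m₁ m₂ m₀ : MeasurableSpace Ω} {μ : Measure Ω} (h : m₁ ≤ m₂) (p : ℝ≥0∞) :
    lpMeas F 𝕜 m₁ p μ ≤ lpMeas F 𝕜 m₂ p μ :=
  fun _ hf => mem_lpMeas_iff_aestronglyMeasurable.2
    ((mem_lpMeas_iff_aestronglyMeasurable.1 hf).mono h)

theorem iInf_lpMeas_of_antitone {m : ℕ → MeasurableSpace Ω} (hm : Antitone m) (p : ℝ≥0∞) :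
    ⨅ n, lpMeas ℝ ℝ (m n) p μ = lpMeas ℝ ℝ (⨅ n, m n) p μ := by
  refine le_antisymm (fun f hf => ?_) (le_iInf fun n => lpMeas_mono (iInf_le m n) p)
  simp only [Submodule.mem_iInf, mem_lpMeas_iff_aestronglyMeasurable] at hf ⊢
  exact AEStronglyMeasurable.iInf_of_antitone hm hf

theorem tendsto_condExpL2_iInf {m : ℕ → MeasurableSpace Ω} (hle : ∀ n, m n ≤ mΩ)
    (hanti : Antitone m) (f : Lp ℝ 2 μ) :
    Tendsto (fun n => (condExpL2 ℝ ℝ (hle n) f : Lp ℝ 2 μ)) atTop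
      (𝓝 (condExpL2 ℝ ℝ ((iInf_le m 0).trans (hle 0)) f)) := by
  have := fun n => Fact.mk (hle n)
  have : Fact ((⨅ n, m n) ≤ mΩ) := ⟨(iInf_le m 0).trans (hle 0)⟩
  have : (⨅ n, lpMeas ℝ ℝ (m n) 2 μ).HasOrthogonalProjection := by
    rw [iInf_lpMeas_of_antitone hanti]; infer_instance
  have h := Submodule.starProjection_tendsto_iInf (fun n => lpMeas ℝ ℝ (m n) 2 μ)
    (fun i j hij => lpMeas_mono (hanti hij) 2) f
  simp only [iInf_lpMeas_of_antitone hanti] at h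
  exact h

theorem tendsto_setIntegral_condExp_iInf [IsFiniteMeasure μ] {m : ℕ → MeasurableSpace Ω}
    (hle : ∀ n, m n ≤ mΩ) (hanti : Antitone m) {X : Ω → ℝ} (hX : MemLp X 2 μ) {s : Set Ω}
    (hs : MeasurableSet s) :
    Tendsto (fun n => ∫ ω in s, (μ[X|m n]) ω ∂μ) atTop
      (𝓝 (∫ ω in s, (μ[X|⨅ n, m n]) ω ∂μ)) := by
  have hinner : ∀ {m'} (hm' : m' ≤ mΩ),
      inner ℝ (indicatorConstLp 2 hs (measure_ne_top μ s) (1 : ℝ))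
        (condExpL2 ℝ ℝ hm' hX.toLp : Lp ℝ 2 μ) = ∫ ω in s, (μ[X|m']) ω ∂μ := fun hm' => by
    rw [L2.inner_indicatorConstLp_one]
    exact setIntegral_congr_ae hs <| by
      filter_upwards [hX.condExpL2_ae_eq_condExp (𝕜 := ℝ) hm'] with ω hω _ using hω
  simpa only [hinner] using
    (tendsto_const_nhds (x := indicatorConstLp 2 hs (measure_ne_top μ s) (1 : ℝ))).inner (𝕜 := ℝ)
      (tendsto_condExpL2_iInf hle hanti hX.toLp)

theorem condExp_mul_condExp_indicator_ae_eq [IsFiniteMeasure μ] (f : Ω → ℝ) {B : Set Ω}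
    (hB : MeasurableSet B) :
    μ[f|m] * μ[B.indicator (fun _ => (1 : ℝ))|m] =ᵐ[μ] μ[B.indicator μ[f|m]|m] := by
  have hmul : μ[f|m] * B.indicator (fun _ => (1 : ℝ)) = B.indicator μ[f|m] := by
    ext ω; by_cases h : ω ∈ B <;> simp [h]
  have := condExp_mul_of_stronglyMeasurable_left (m := m) stronglyMeasurable_condExp
    (hmul ▸ integrable_condExp.indicator hB) ((integrable_const (1 : ℝ)).indicator hB)
  rw [hmul] at this
  exact this.symm

theorem setIntegral_condExp_mul_condExp_indicator [IsFiniteMeasure μ] (hm : m ≤ mΩ)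
    (f : Ω → ℝ) {B C : Set Ω} (hB : MeasurableSet B) (hC : MeasurableSet[m] C) :
    ∫ ω in C, (μ[f|m] * μ[B.indicator (fun _ => (1 : ℝ))|m]) ω ∂μ =
      ∫ ω in C ∩ B, (μ[f|m]) ω ∂μ := by
  rw [integral_congr_ae (ae_restrict_of_ae (condExp_mul_condExp_indicator_ae_eq f hB)),
    setIntegral_condExp hm (integrable_condExp.indicator hB) hC, setIntegral_indicator hB]

theorem condExp_indicator_ae_eq_mul_iff [IsFiniteMeasure μ] (hm : m ≤ mΩ) {f : Ω → ℝ}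
    (hf : Integrable f μ) {B : Set Ω} (hB : MeasurableSet B) :
    μ[B.indicator f|m] =ᵐ[μ] μ[f|m] * μ[B.indicator (fun _ => (1 : ℝ))|m] ↔
      ∀ C, MeasurableSet[m] C → ∫ ω in C ∩ B, (μ[f|m]) ω ∂μ = ∫ ω in C ∩ B, f ω ∂μ := by
  constructor
  · intro h C hC
    rw [← setIntegral_condExp_mul_condExp_indicator hm f hB hC, ← setIntegral_indicator hB,
      ← setIntegral_condExp hm (hf.indicator hB) hC]
    exact integral_congr_ae (ae_restrict_of_ae h.symm)
  · intro h
    refine (ae_eq_condExp_of_forall_setIntegral_eq hm (hf.indicator hB) (fun C _ _ => ?_)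
      (fun C hC _ => ?_) ?_).symm
    · exact (integrable_condExp.congr (condExp_mul_condExp_indicator_ae_eq f hB).symm).integrableOn
    · rw [setIntegral_condExp_mul_condExp_indicator hm f hB hC, h C hC, setIntegral_indicator hB]
    · exact (stronglyMeasurable_condExp.mul stronglyMeasurable_condExp).aestronglyMeasurable

end MeasureTheory

theorem condIndepGiven_iff_forall_setIntegral {Ω : Type*} {mΩ : MeasurableSpace Ω}
    (μ : Measure Ω) [IsFiniteMeasure μ] {m₁ m₂ m : MeasurableSpace Ω} (h₁ : m₁ ≤ mΩ)
    (h₂ : m₂ ≤ mΩ) (hm : m ≤ mΩ) :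
    CondIndepGiven μ m₁ m₂ m ↔ ∀ A B, MeasurableSet[m₁] A → MeasurableSet[m₂] B →
      ∀ C, MeasurableSet[m] C → ∫ ω in C ∩ B, (μ[A.indicator (fun _ => (1 : ℝ))|m]) ω ∂μ =
        ∫ ω in C ∩ B, A.indicator (fun _ => (1 : ℝ)) ω ∂μ := by
  refine forall₄_congr fun A B hA hB => ?_
  rw [← condExp_indicator_ae_eq_mul_iff hm ((integrable_const _).indicator (h₁ A hA)) (h₂ B hB),
    Set.indicator_indicator, Set.inter_comm]

/-- Lemma 3.6: if `F_t` is conditionally independent of `H` given `G_t` for all `t` in a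
dense set `T`, then `F_{t+}` is conditionally independent of `H` given `G_{t+}` for all `t`. -/
theorem stmt8 {Ω : Type*} {mΩ : MeasurableSpace Ω}
    (μ : Measure Ω) [IsProbabilityMeasure μ]
    (F G : Filtration NNReal mΩ) (H : MeasurableSpace Ω) (hH : H ≤ mΩ)
    (T : Set NNReal) (hT : Dense T)
    (hind : ∀ t ∈ T, CondIndepGiven μ (F t) H (G t)) :
    ∀ t : NNReal,
      CondIndepGiven μ (⨅ s ∈ Set.Ioi t, F s) H (⨅ s ∈ Set.Ioi t, G s) := by
  intro t
  obtain ⟨u, hu_anti, hu_mem, hu_lim⟩ := hT.exists_seq_strictAnti_tendsto t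
  have hle (ℱ : Filtration NNReal mΩ) (n : ℕ) : ⨅ s ∈ Set.Ioi t, ℱ s ≤ ℱ (u n) :=
    iInf₂_le _ (hu_mem n).1
  have hGu : ⨅ n, G (u n) = ⨅ s ∈ Set.Ioi t, G s := by
    refine le_antisymm (le_iInf₂ fun s hs => ?_) (le_iInf (hle G))
    obtain ⟨n, hn⟩ := (hu_lim.eventually_lt_const hs).exists
    exact iInf_le_of_le n (G.mono hn.le)
  rw [condIndepGiven_iff_forall_setIntegral μ ((hle F 0).trans (F.le _)) hH
    ((hle G 0).trans (G.le _))]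
  intro A B hA hB C hC
  have hlim := tendsto_setIntegral_condExp_iInf (fun n => G.le (u n))
    (fun i j hij => G.mono (hu_anti.antitone hij))
    (memLp_indicator_const 2 ((hle F 0).trans (F.le _) A hA) (1 : ℝ) (Or.inr (measure_ne_top μ A)))
    (((hle G 0).trans (G.le _) C hC).inter (hH B hB))
  rw [hGu] at hlim
  refine tendsto_nhds_unique hlim (tendsto_const_nhds.congr fun n => ?_)
  exact ((condIndepGiven_iff_forall_setIntegral μ (F.le _) hH (G.le _)).1
    (hind _ (hu_mem n).2) A B (hle F n A hA) hB C (hle G n C hC)).symm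
end

section
/- Define Φ : D([0,∞); [0,1]) → [0,∞] on the Skorokhod space of càdlàg functions with values in [0,1] by Φ(h) = inf{t ≥ 0 : h(t) ≥ 1/2}. Then Φ is continuous (with respect to the Skorokhod J₁ topology) at every point h of the form h(·) = 1_{[s,∞)}(·) for some s ≥ 0. -/
open Filter Topology

/-- A càdlàg function on `[0,∞)`: right-continuous with left limits. -/
def Cadlag (h : NNReal → ℝ) : Prop :=
  (∀ t, ContinuousWithinAt h (Set.Ici t) t) ∧
  (∀ t : NNReal, 0 < t → ∃ L, Tendsto h (nhdsWithin t (Set.Iio t)) (𝓝 L))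

/-- Convergence in the Skorokhod J₁ topology on `D([0,∞); ℝ)`: there are continuous,
strictly increasing bijective time changes `λₙ` of `[0,∞)` converging uniformly on compacts
to the identity such that `hₙ ∘ λₙ → h` uniformly on compacts. -/
def SkorokhodTendsto (hn : ℕ → NNReal → ℝ) (h : NNReal → ℝ) : Prop :=
  ∃ lam : ℕ → NNReal → NNReal,
    (∀ n, Continuous (lam n)) ∧ (∀ n, StrictMono (lam n)) ∧
    (∀ n, Function.Bijective (lam n)) ∧
    (∀ T : NNReal,
      Tendsto (fun n => ⨆ t : Set.Icc (0 : NNReal) T, |((lam n t : NNReal) : ℝ) - (t : ℝ)|)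
        atTop (𝓝 0)) ∧
    (∀ T : NNReal,
      Tendsto (fun n => ⨆ t : Set.Icc (0 : NNReal) T, |hn n (lam n t) - h t|)
        atTop (𝓝 0))

/-- The first-passage map `Φ(h) = inf {t ≥ 0 : h(t) ≥ 1/2}`, with values in `[0,∞]`
(equal to `∞` if the set is empty). -/
noncomputable def Phi (h : NNReal → ℝ) : ENNReal :=
  ⨅ (t : NNReal) (_ : (1 : ℝ) / 2 ≤ h t), (t : ENNReal)

/-! Along the time changes `λₙ`, the function `hₙ ∘ λₙ` is within `1/2` of `1_{[s,∞)}` on `[0, s]`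
for large `n`, so it stays below `1/2` before `s` and reaches it at `s`. Since `λₙ` is an increasing
bijection, `hₙ` therefore first reaches `1/2` exactly at `λₙ(s)`, i.e. `Φ(hₙ) = λₙ(s)`, and
`λₙ(s) → s`. -/

lemma Phi_eq_of_half_le_of_lt_half {f : NNReal → ℝ} {u : NNReal} (hu : 1 / 2 ≤ f u)
    (hlt : ∀ t < u, f t < 1 / 2) : Phi f = u :=
  le_antisymm (iInf₂_le u hu) <| le_iInf₂ fun t ht =>
    ENNReal.coe_le_coe.mpr <| not_lt.mp fun htu => (hlt t htu).not_ge ht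

lemma Phi_indicator (s : NNReal) : Phi (fun t => if s ≤ t then (1 : ℝ) else 0) = s :=
  Phi_eq_of_half_le_of_lt_half (by norm_num) fun t hts => by simp [not_le.mpr hts]

lemma Phi_eq_of_comp_timeChange {f : NNReal → ℝ} {lam : NNReal → NNReal} (hmono : StrictMono lam)
    (hsurj : Function.Surjective lam) {s : NNReal} (hs : 1 / 2 ≤ f (lam s))
    (hlt : ∀ t < s, f (lam t) < 1 / 2) : Phi f = lam s :=
  Phi_eq_of_half_le_of_lt_half hs fun u hu => by
    obtain ⟨t, rfl⟩ := hsurj u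
    exact hlt t (hmono.lt_iff_lt.mp hu)

lemma bddAbove_range_abs_sub_of_monotone {lam : NNReal → NNReal} (hmono : Monotone lam)
    (T : NNReal) : BddAbove (Set.range fun t : Set.Icc (0 : NNReal) T => |(lam t : ℝ) - t|) := by
  refine ⟨lam T + T, ?_⟩
  rintro _ ⟨⟨t, -, htT⟩, rfl⟩
  have hlam : (lam t : ℝ) ≤ lam T := NNReal.coe_le_coe.mpr (hmono htT)
  have htT' : (t : ℝ) ≤ T := htT
  rw [abs_le]
  constructor <;> linarith [(lam t).coe_nonneg, t.coe_nonneg]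

lemma bddAbove_range_abs_sub_comp {f g : NNReal → ℝ} (hf : ∃ C, ∀ t, |f t| ≤ C)
    (hg : ∃ C, ∀ t, |g t| ≤ C) (lam : NNReal → NNReal) (T : NNReal) :
    BddAbove (Set.range fun t : Set.Icc (0 : NNReal) T => |f (lam t) - g t|) := by
  obtain ⟨C, hC⟩ := hf
  obtain ⟨D, hD⟩ := hg
  refine ⟨C + D, ?_⟩
  rintro _ ⟨t, rfl⟩
  exact (abs_sub _ _).trans (add_le_add (hC _) (hD _))

namespace SkorokhodTendsto

variable {hn : ℕ → NNReal → ℝ} {h : NNReal → ℝ}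

/- A supremum `⨆` of an unbounded family of reals is `0`, so the suprema in `SkorokhodTendsto`
only control the deviations when `hₙ` and `h` are bounded. -/
theorem exists_timeChange (hconv : SkorokhodTendsto hn h) (hbdd : ∀ n, ∃ C, ∀ t, |hn n t| ≤ C)
    (hh : ∃ C, ∀ t, |h t| ≤ C) :
    ∃ lam : ℕ → NNReal → NNReal, (∀ n, StrictMono (lam n)) ∧
      (∀ n, Function.Surjective (lam n)) ∧ (∀ t, Tendsto (fun n => lam n t) atTop (𝓝 t)) ∧
      ∀ T : NNReal, ∀ ε > 0, ∀ᶠ n in atTop, ∀ t ≤ T, |hn n (lam n t) - h t| < ε := by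
  obtain ⟨lam, -, hmono, hbij, htime, hval⟩ := hconv
  refine ⟨lam, hmono, fun n => (hbij n).2, fun t => ?_, fun T ε hε => ?_⟩
  · rw [← NNReal.tendsto_coe, tendsto_iff_norm_sub_tendsto_zero]
    refine squeeze_zero (fun _ => norm_nonneg _) (fun n => ?_) (htime t)
    exact le_ciSup (bddAbove_range_abs_sub_of_monotone (hmono n).monotone t) ⟨t, zero_le, le_rfl⟩
  · filter_upwards [(hval T).eventually_lt_const hε] with n hn t ht
    have hbdd_dev := bddAbove_range_abs_sub_comp (hbdd n) hh (lam n) T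
    exact (le_ciSup hbdd_dev ⟨t, zero_le, ht⟩).trans_lt hn

end SkorokhodTendsto

theorem stmt9_general (s : NNReal) (hn : ℕ → NNReal → ℝ)
    (hrange : ∀ n t, hn n t ∈ Set.Icc (0 : ℝ) 1)
    (hconv : SkorokhodTendsto hn (fun t => if s ≤ t then (1 : ℝ) else 0)) :
    Tendsto (fun n => Phi (hn n)) atTop (𝓝 (Phi fun t => if s ≤ t then (1 : ℝ) else 0)) := by
  obtain ⟨lam, hmono, hsurj, hlam, hclose⟩ := hconv.exists_timeChange
    (fun n => ⟨1, fun t => abs_le.mpr ⟨by linarith [(hrange n t).1], (hrange n t).2⟩⟩)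
    ⟨1, fun t => by split_ifs <;> norm_num⟩
  rw [Phi_indicator]
  refine (ENNReal.tendsto_coe.mpr (hlam s)).congr' ?_
  filter_upwards [hclose s (1 / 2) (by norm_num)] with n hdev
  refine (Phi_eq_of_comp_timeChange (hmono n) (hsurj n) ?_ fun t hts => ?_).symm
  · have := hdev s le_rfl
    rw [if_pos le_rfl] at this
    linarith [(abs_lt.mp this).1]
  · have := hdev t hts.le
    rw [if_neg (not_le.mpr hts), sub_zero] at this
    exact (le_abs_self _).trans_lt this

/-- Lemma 4.2: `Φ` is continuous (in the Skorokhod J₁ sense) at every indicator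
`h = 1_{[s,∞)}`: if càdlàg `[0,1]`-valued `hₙ` converge to `1_{[s,∞)}` in the J₁ sense,
then `Φ(hₙ) → Φ(1_{[s,∞)}) = s`. -/
theorem stmt9 (s : NNReal) (hn : ℕ → NNReal → ℝ)
    (hcad : ∀ n, Cadlag (hn n))
    (hrange : ∀ n t, hn n t ∈ Set.Icc (0 : ℝ) 1)
    (hconv : SkorokhodTendsto hn (fun t => if s ≤ t then (1 : ℝ) else 0)) :
    Tendsto (fun n => Phi (hn n)) atTop (𝓝 (Phi fun t => if s ≤ t then (1 : ℝ) else 0)) :=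
  stmt9_general s hn hrange hconv
end

section
/- On a probability space with two filtrations G and F satisfying F_t ⊂ G_t for all t, the following are equivalent: (i) for every t, G_t is conditionally independent of F_∞ given F_t; (ii) for every t and every integrable F_∞-measurable random variable X, E[X | F_t] = E[X | G_t] a.s.; (iii) for every t and every integrable G_t-measurable random variable X, E[X | F_t] = E[X | F_∞] a.s. -/
/-!
Conditional independence of `G_t` and `F_∞` given `F_t` is symmetric in `G_t` and `F_∞`, and it
holds iff `E[1_B | F_t] = E[1_B | G_t]` for every `B ∈ F_∞`: for `A ∈ G_t`, the factorisation of
`E[1_A 1_B | F_t]` is what makes `∫_A E[1_B | F_t]` equal to `P(A ∩ B)`. To pass from indicators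
to an integrable `F_∞`-measurable `X`, use self-adjointness of conditional expectation: for
`A ∈ G_t`, `∫_A E[X | F_t] = ∫ E[1_A | F_t] X`, and the indicator identity with `G_t` and `F_∞`
exchanged turns this into `∫ E[1_A | F_∞] X = ∫_A X`. Exchanging the two σ-fields once more
turns (ii) into (iii).
-/

open MeasureTheory Filter Topology

open Set
open scoped ProbabilityTheory

section

variable {Ω : Type*} {m m₁ m₂ mΩ : MeasurableSpace Ω} {μ : Measure Ω}

theorem CondIndepGiven.symm (h : CondIndepGiven μ m₁ m₂ m) : CondIndepGiven μ m₂ m₁ m :=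
  fun A B hA hB => by
    rw [inter_comm]
    exact (h B A hB hA).trans (.of_forall fun _ => mul_comm _ _)

theorem condIndepGiven_comm : CondIndepGiven μ m₁ m₂ m ↔ CondIndepGiven μ m₂ m₁ m :=
  ⟨.symm, .symm⟩

theorem norm_indicator_one_le (s : Set Ω) (x : Ω) : ‖s.indicator (fun _ => (1 : ℝ)) x‖ ≤ 1 :=
  (norm_indicator_le_norm_self _ x).trans_eq norm_one

theorem ae_norm_condExp_indicator_le_one (s : Set Ω) : ∀ᵐ x ∂μ, ‖(μ⟦s | m⟧) x‖ ≤ 1 :=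
  ae_bdd_abs_condExp_of_ae_bdd_abs (.of_forall (norm_indicator_one_le s))

theorem setIntegral_eq_integral_indicator_one_mul {s : Set Ω} (hs : MeasurableSet s) (f : Ω → ℝ) :
    ∫ x in s, f x ∂μ = ∫ x, (s.indicator (fun _ => (1 : ℝ)) * f) x ∂μ := by
  rw [← integral_indicator hs]
  congr 1 with x
  by_cases hx : x ∈ s <;> simp [hx]

variable [IsFiniteMeasure μ]

theorem integrable_indicator_one {s : Set Ω} (hs : MeasurableSet s) :
    Integrable (s.indicator fun _ => (1 : ℝ)) μ :=
  (integrable_const 1).indicator hs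

theorem integral_mul_condExp (hm : m ≤ mΩ) {f g : Ω → ℝ} (hf : Integrable f μ)
    (hfg : Integrable (f * μ[g | m]) μ) :
    ∫ x, (f * μ[g | m]) x ∂μ = ∫ x, (μ[f | m] * μ[g | m]) x ∂μ := by
  rw [mul_comm f, ← integral_condExp hm, mul_comm (μ[f | m])]
  exact integral_congr_ae
    (condExp_mul_of_stronglyMeasurable_left stronglyMeasurable_condExp (mul_comm f _ ▸ hfg) hf)

theorem setIntegral_condExp_eq_integral_condExp_mul_condExp (hm : m ≤ mΩ) {s : Set Ω}
    (hs : MeasurableSet s) (g : Ω → ℝ) :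
    ∫ x in s, μ[g | m] x ∂μ = ∫ x, (μ⟦s | m⟧ * μ[g | m]) x ∂μ := by
  rw [setIntegral_eq_integral_indicator_one_mul hs]
  exact integral_mul_condExp hm (integrable_indicator_one hs)
    (integrable_condExp.bdd_mul (by fun_prop) (.of_forall (norm_indicator_one_le s)))

theorem setIntegral_condExp_eq_integral_condExp_indicator_mul (hm : m ≤ mΩ) {s : Set Ω}
    (hs : MeasurableSet s) {g : Ω → ℝ} (hg : Integrable g μ) :
    ∫ x in s, μ[g | m] x ∂μ = ∫ x, (μ⟦s | m⟧ * g) x ∂μ := by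
  rw [setIntegral_condExp_eq_integral_condExp_mul_condExp hm hs, mul_comm,
    ← integral_mul_condExp hm hg, mul_comm]
  exact hg.mul_bdd (stronglyMeasurable_condExp.mono hm).aestronglyMeasurable
    (ae_norm_condExp_indicator_le_one s)

theorem setIntegral_condExp_indicator_eq_measureReal_inter (hm : m ≤ mΩ) {s t : Set Ω}
    (hs : MeasurableSet s) (ht : MeasurableSet t) (h : μ⟦s ∩ t | m⟧ =ᵐ[μ] μ⟦s | m⟧ * μ⟦t | m⟧) :
    ∫ x in s, (μ⟦t | m⟧) x ∂μ = μ.real (s ∩ t) := by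
  rw [setIntegral_condExp_eq_integral_condExp_mul_condExp hm hs, ← integral_congr_ae h,
    integral_condExp hm]
  exact integral_indicator_one (hs.inter ht)

theorem condExp_indicator_eq_of_condIndepGiven (hm : m ≤ m₁) (h₁ : m₁ ≤ mΩ) (h₂ : m₂ ≤ mΩ)
    (h : CondIndepGiven μ m₁ m₂ m) {t : Set Ω} (ht : MeasurableSet[m₂] t) :
    μ⟦t | m⟧ =ᵐ[μ] μ⟦t | m₁⟧ := by
  refine ae_eq_condExp_of_forall_setIntegral_eq h₁ (integrable_indicator_one (h₂ t ht))
    (fun _ _ _ => integrable_condExp.integrableOn) (fun s hs _ => ?_)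
    (stronglyMeasurable_condExp.mono hm).aestronglyMeasurable
  rw [setIntegral_condExp_indicator_eq_measureReal_inter (hm.trans h₁) (h₁ s hs) (h₂ t ht)
    (h s t hs ht), setIntegral_indicator (h₂ t ht)]
  simp

theorem condIndepGiven_of_condExp_indicator_eq (hm : m ≤ m₁) (h₁ : m₁ ≤ mΩ) (h₂ : m₂ ≤ mΩ)
    (h : ∀ t, MeasurableSet[m₂] t → μ⟦t | m⟧ =ᵐ[μ] μ⟦t | m₁⟧) : CondIndepGiven μ m₁ m₂ m := by
  intro s t hs ht
  calc μ⟦s ∩ t | m⟧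
      =ᵐ[μ] μ[μ[s.indicator (fun _ => (1 : ℝ)) * t.indicator (fun _ => 1) | m₁] | m] := by
        have hinter : (s ∩ t).indicator (fun _ => (1 : ℝ)) =
            s.indicator (fun _ => 1) * t.indicator (fun _ => 1) := inter_indicator_one
        rw [hinter]
        exact (condExp_condExp_of_le hm h₁).symm
    _ =ᵐ[μ] μ[s.indicator (fun _ => (1 : ℝ)) * μ⟦t | m₁⟧ | m] :=
        condExp_congr_ae (condExp_stronglyMeasurable_mul_of_bound h₁
          (stronglyMeasurable_const.indicator hs) (integrable_indicator_one (h₂ t ht)) 1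
          (.of_forall (norm_indicator_one_le s)))
    _ =ᵐ[μ] μ[μ⟦t | m⟧ * s.indicator (fun _ => (1 : ℝ)) | m] := by
        refine condExp_congr_ae ?_
        filter_upwards [h t ht] with x hx
        simp only [Pi.mul_apply, hx, mul_comm]
    _ =ᵐ[μ] μ⟦t | m⟧ * μ⟦s | m⟧ :=
        condExp_stronglyMeasurable_mul_of_bound (hm.trans h₁) stronglyMeasurable_condExp
          (integrable_indicator_one (h₁ s hs)) 1 (ae_norm_condExp_indicator_le_one t)
    _ =ᵐ[μ] μ⟦s | m⟧ * μ⟦t | m⟧ := .of_forall fun _ => mul_comm _ _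

theorem condIndepGiven_iff_condExp_indicator_eq (hm : m ≤ m₁) (h₁ : m₁ ≤ mΩ) (h₂ : m₂ ≤ mΩ) :
    CondIndepGiven μ m₁ m₂ m ↔ ∀ t, MeasurableSet[m₂] t → μ⟦t | m⟧ =ᵐ[μ] μ⟦t | m₁⟧ :=
  ⟨fun h _ => condExp_indicator_eq_of_condIndepGiven hm h₁ h₂ h,
    condIndepGiven_of_condExp_indicator_eq hm h₁ h₂⟩

theorem condExp_eq_of_condExp_indicator_eq (hm : m ≤ m₁) (h₁ : m₁ ≤ mΩ) (h₂ : m₂ ≤ mΩ)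
    (h : ∀ s, MeasurableSet[m₁] s → μ⟦s | m⟧ =ᵐ[μ] μ⟦s | m₂⟧) {X : Ω → ℝ}
    (hX : Integrable X μ) (hXm : StronglyMeasurable[m₂] X) : μ[X | m] =ᵐ[μ] μ[X | m₁] := by
  refine ae_eq_condExp_of_forall_setIntegral_eq h₁ hX
    (fun _ _ _ => integrable_condExp.integrableOn) (fun s hs _ => ?_)
    (stronglyMeasurable_condExp.mono hm).aestronglyMeasurable
  calc ∫ x in s, μ[X | m] x ∂μ
      = ∫ x, (μ⟦s | m⟧ * X) x ∂μ :=
        setIntegral_condExp_eq_integral_condExp_indicator_mul (hm.trans h₁) (h₁ s hs) hX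
    _ = ∫ x, (μ⟦s | m₂⟧ * X) x ∂μ := integral_congr_ae ((h s hs).mul .rfl)
    _ = ∫ x in s, μ[X | m₂] x ∂μ :=
        (setIntegral_condExp_eq_integral_condExp_indicator_mul h₂ (h₁ s hs) hX).symm
    _ = ∫ x in s, X x ∂μ := by rw [condExp_of_stronglyMeasurable h₂ hXm hX]

theorem condIndepGiven_iff_condExp_eq (hm₁ : m ≤ m₁) (hm₂ : m ≤ m₂) (h₁ : m₁ ≤ mΩ)
    (h₂ : m₂ ≤ mΩ) :
    CondIndepGiven μ m₁ m₂ m ↔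
      ∀ X : Ω → ℝ, Integrable X μ → Measurable[m₂] X → μ[X | m] =ᵐ[μ] μ[X | m₁] := by
  refine ⟨fun h X hX hXm => ?_, fun h => ?_⟩
  · have h' := (condIndepGiven_iff_condExp_indicator_eq hm₂ h₂ h₁).1 h.symm
    exact condExp_eq_of_condExp_indicator_eq hm₁ h₁ h₂ h' hX hXm.stronglyMeasurable
  · exact (condIndepGiven_iff_condExp_indicator_eq hm₁ h₁ h₂).2 fun t ht =>
      h _ (integrable_indicator_one (h₂ t ht)) (measurable_const.indicator ht)

end

/-- Theorem 3.10 (parts (i), (iv), (v)): for filtrations `F ⊂ G`, the immersion property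
`G_t ⟂ F_∞ | F_t` is equivalent to (ii) `E[X|F_t] = E[X|G_t]` for all integrable
`F_∞`-measurable `X`, and to (iii) `E[X|F_t] = E[X|F_∞]` for all integrable
`G_t`-measurable `X`. -/
theorem stmt15 {Ω : Type*} {mΩ : MeasurableSpace Ω}
    (μ : Measure Ω) [IsProbabilityMeasure μ]
    (F G : Filtration NNReal mΩ) (hFG : ∀ t, F t ≤ G t) :
    ((∀ t, CondIndepGiven μ (G t) (⨆ s : NNReal, (F s : MeasurableSpace Ω)) (F t)) ↔
      (∀ t, ∀ X : Ω → ℝ, Integrable X μ →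
        Measurable[⨆ s : NNReal, (F s : MeasurableSpace Ω)] X →
        μ[X | F t] =ᵐ[μ] μ[X | G t])) ∧
    ((∀ t, CondIndepGiven μ (G t) (⨆ s : NNReal, (F s : MeasurableSpace Ω)) (F t)) ↔
      (∀ t, ∀ X : Ω → ℝ, Integrable X μ → Measurable[G t] X →
        μ[X | F t] =ᵐ[μ] μ[X | ⨆ s : NNReal, (F s : MeasurableSpace Ω)])) := by
  have hF : ∀ t, F t ≤ ⨆ s : NNReal, (F s : MeasurableSpace Ω) := le_iSup (fun s => F s)
  have hFΩ : ⨆ s : NNReal, (F s : MeasurableSpace Ω) ≤ mΩ := iSup_le F.le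
  refine ⟨forall_congr' fun t => ?_, forall_congr' fun t => ?_⟩
  · exact condIndepGiven_iff_condExp_eq (hFG t) (hF t) (G.le t) hFΩ
  · rw [condIndepGiven_comm]
    exact condIndepGiven_iff_condExp_eq (hF t) (hFG t) hFΩ (G.le t)
end

section
/- On a probability space with filtrations F ⊂ G, suppose that for every t, G_t is conditionally independent of F_∞ given F_t. Then every bounded F-martingale is a G-martingale. -/
open MeasureTheory Filter Topology

/-!
Testing the conditional independence of `G_s` and `F_∞` given `F_s` against `A ∈ F_∞` and
pulling the `F_s`-measurable factor out of the conditional expectation shows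
`E[1_B | F_∞] = E[1_B | F_s]` for every `B ∈ G_s`. Hence, for integrable `F_∞`-measurable `X`,
`∫ 1_B X = ∫ E[1_B | F_∞] X = ∫ E[1_B | F_s] X = ∫ 1_B E[X | F_s]`, i.e.
`E[X | G_s] = E[X | F_s]`; for `X = M_t` the right-hand side is `M_s`.
-/

namespace MeasureTheory

variable {Ω : Type*} {m mΩ : MeasurableSpace Ω} {μ : Measure Ω}

local notation "𝟙[" s "]" => Set.indicator s (fun _ => (1 : ℝ))

lemma _root_.mul_indicator_one_eq_indicator (f : Ω → ℝ) (s : Set Ω) :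
    f * 𝟙[s] = s.indicator f := by
  ext ω
  by_cases hω : ω ∈ s <;> simp [hω]

lemma setIntegral_eq_integral_mul_indicator_one {s : Set Ω} (hs : MeasurableSet s)
    (f : Ω → ℝ) : ∫ ω in s, f ω ∂μ = ∫ ω, (f * 𝟙[s]) ω ∂μ := by
  rw [mul_indicator_one_eq_indicator, integral_indicator hs]

lemma integrable_indicator_one [IsFiniteMeasure μ] {s : Set Ω} (hs : MeasurableSet s) :
    Integrable 𝟙[s] μ :=
  (integrable_const 1).indicator hs

lemma Integrable.mul_indicator_one {f : Ω → ℝ} (hf : Integrable f μ) {s : Set Ω}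
    (hs : MeasurableSet s) : Integrable (f * 𝟙[s]) μ := by
  rw [mul_indicator_one_eq_indicator]
  exact hf.indicator hs

lemma ae_abs_condExp_indicator_one_le_one (s : Set Ω) : ∀ᵐ ω ∂μ, |μ[𝟙[s] | m] ω| ≤ 1 :=
  ae_bdd_abs_condExp_of_ae_bdd_abs <| .of_forall fun ω => by
    by_cases hω : ω ∈ s <;> simp [hω]

lemma Integrable.condExp_indicator_one_mul {f : Ω → ℝ} (hf : Integrable f μ) (s : Set Ω) :
    Integrable (μ[𝟙[s] | m] * f) μ :=
  hf.bdd_mul (c := 1) integrable_condExp.aestronglyMeasurable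
    (by simpa only [Real.norm_eq_abs] using ae_abs_condExp_indicator_one_le_one s)

lemma integral_mul_condExp_of_stronglyMeasurable (hm : m ≤ mΩ) [SigmaFinite (μ.trim hm)]
    {f g : Ω → ℝ} (hf : StronglyMeasurable[m] f) (hfg : Integrable (f * g) μ)
    (hg : Integrable g μ) : ∫ ω, (f * μ[g | m]) ω ∂μ = ∫ ω, (f * g) ω ∂μ := by
  rw [← integral_condExp hm (f := f * g),
    integral_congr_ae (condExp_mul_of_stronglyMeasurable_left hf hfg hg)]

lemma condExp_indicator_one_ae_eq_of_condIndepGiven [IsFiniteMeasure μ]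
    {m₁ m₂ : MeasurableSpace Ω} (hm₁ : m₁ ≤ mΩ) (hm₂ : m₂ ≤ mΩ) (hmm₂ : m ≤ m₂)
    (hind : CondIndepGiven μ m₁ m₂ m) {B : Set Ω} (hB : MeasurableSet[m₁] B) :
    μ[𝟙[B] | m₂] =ᵐ[μ] μ[𝟙[B] | m] := by
  have hm : m ≤ mΩ := hmm₂.trans hm₂
  have hBΩ : MeasurableSet[mΩ] B := hm₁ B hB
  refine (ae_eq_condExp_of_forall_setIntegral_eq hm₂ (integrable_indicator_one hBΩ)
    (fun _ _ _ => integrable_condExp.integrableOn) (fun A hA _ => ?_)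
    (stronglyMeasurable_condExp.mono hmm₂).aestronglyMeasurable).symm
  have hAΩ : MeasurableSet[mΩ] A := hm₂ A hA
  calc ∫ ω in A, μ[𝟙[B] | m] ω ∂μ
      = ∫ ω, (μ[𝟙[B] | m] * 𝟙[A]) ω ∂μ := setIntegral_eq_integral_mul_indicator_one hAΩ _
    _ = ∫ ω, (μ[𝟙[B] | m] * μ[𝟙[A] | m]) ω ∂μ :=
        (integral_mul_condExp_of_stronglyMeasurable hm stronglyMeasurable_condExp
          (integrable_condExp.mul_indicator_one hAΩ) (integrable_indicator_one hAΩ)).symm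
    _ = ∫ ω, μ[𝟙[B ∩ A] | m] ω ∂μ := integral_congr_ae (hind B A hB hA).symm
    _ = ∫ ω, (𝟙[B] * 𝟙[A]) ω ∂μ := by
        rw [integral_condExp hm]
        exact congrArg _ Set.inter_indicator_one
    _ = ∫ ω in A, 𝟙[B] ω ∂μ := (setIntegral_eq_integral_mul_indicator_one hAΩ _).symm

theorem condExp_ae_eq_of_condIndepGiven [IsFiniteMeasure μ] {m₁ m₂ : MeasurableSpace Ω}
    (hm₁ : m₁ ≤ mΩ) (hm₂ : m₂ ≤ mΩ) (hmm₁ : m ≤ m₁) (hmm₂ : m ≤ m₂)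
    (hind : CondIndepGiven μ m₁ m₂ m) {X : Ω → ℝ} (hX : StronglyMeasurable[m₂] X)
    (hXi : Integrable X μ) : μ[X | m₁] =ᵐ[μ] μ[X | m] := by
  have hm : m ≤ mΩ := hmm₁.trans hm₁
  refine (ae_eq_condExp_of_forall_setIntegral_eq hm₁ hXi
    (fun _ _ _ => integrable_condExp.integrableOn) (fun B hB _ => ?_)
    (stronglyMeasurable_condExp.mono hmm₁).aestronglyMeasurable).symm
  have hBΩ : MeasurableSet[mΩ] B := hm₁ B hB
  calc ∫ ω in B, μ[X | m] ω ∂μ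
      = ∫ ω, (μ[X | m] * 𝟙[B]) ω ∂μ := setIntegral_eq_integral_mul_indicator_one hBΩ _
    _ = ∫ ω, (μ[X | m] * μ[𝟙[B] | m]) ω ∂μ :=
        (integral_mul_condExp_of_stronglyMeasurable hm stronglyMeasurable_condExp
          (integrable_condExp.mul_indicator_one hBΩ) (integrable_indicator_one hBΩ)).symm
    _ = ∫ ω, (μ[𝟙[B] | m] * X) ω ∂μ := by
        rw [mul_comm, integral_mul_condExp_of_stronglyMeasurable hm stronglyMeasurable_condExp
          (hXi.condExp_indicator_one_mul B) hXi]
    _ = ∫ ω, (μ[𝟙[B] | m₂] * X) ω ∂μ := integral_congr_ae <| by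
        filter_upwards [condExp_indicator_one_ae_eq_of_condIndepGiven hm₁ hm₂ hmm₂ hind hB]
          with ω hω
        simp only [Pi.mul_apply, hω]
    _ = ∫ ω, (X * 𝟙[B]) ω ∂μ := by
        rw [mul_comm, integral_mul_condExp_of_stronglyMeasurable hm₂ hX
          (hXi.mul_indicator_one hBΩ) (integrable_indicator_one hBΩ)]
    _ = ∫ ω in B, X ω ∂μ := (setIntegral_eq_integral_mul_indicator_one hBΩ _).symm

end MeasureTheory

theorem stmt16_general {Ω : Type*} {mΩ : MeasurableSpace Ω}
    {μ : Measure Ω} [IsProbabilityMeasure μ]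
    (F G : Filtration NNReal mΩ) (hFG : ∀ t, F t ≤ G t)
    (himm : ∀ t, CondIndepGiven μ (G t) (⨆ s : NNReal, (F s : MeasurableSpace Ω)) (F t))
    (M : NNReal → Ω → ℝ) (hM : Martingale M F μ) :
    Martingale M G μ := by
  refine ⟨fun t => (hM.stronglyMeasurable t).mono (hFG t), fun s t hst => ?_⟩
  have hF_le_iSup : ∀ t, F t ≤ ⨆ s, (F s : MeasurableSpace Ω) :=
    le_iSup (fun s => (F s : MeasurableSpace Ω))
  calc μ[M t | G s] =ᵐ[μ] μ[M t | F s] :=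
        condExp_ae_eq_of_condIndepGiven (G.le s) (iSup_le F.le) (hFG s) (hF_le_iSup s) (himm s)
          ((hM.stronglyMeasurable t).mono (hF_le_iSup t)) (hM.integrable t)
    _ =ᵐ[μ] M s := hM.condExp_ae_eq hst

/-- Theorem 3.10 ((i) ⇒ (ii)): under the immersion property (`G_t` conditionally
independent of `F_∞` given `F_t` for all `t`), every bounded `F`-martingale is a
`G`-martingale. -/
theorem stmt16 {Ω : Type*} {mΩ : MeasurableSpace Ω}
    {μ : Measure Ω} [IsProbabilityMeasure μ]
    (F G : Filtration NNReal mΩ) (hFG : ∀ t, F t ≤ G t)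
    (himm : ∀ t, CondIndepGiven μ (G t) (⨆ s : NNReal, (F s : MeasurableSpace Ω)) (F t))
    (M : NNReal → Ω → ℝ) (hM : Martingale M F μ)
    (C : ℝ) (hbdd : ∀ t ω, |M t ω| ≤ C) :
    Martingale M G μ :=
  stmt16_general F G hFG himm M hM
end

section
/- Let Y be a càdlàg process with values in a separable Fréchet space, with independent increments, and let F^Y be its natural filtration. Let G be a filtration with F^Y_t ⊂ G_t for all t. Then the following are equivalent: (i) for every t, G_t is conditionally independent of F^Y_∞ given F^Y_t; (ii) for every s ≥ 0, the increment process (Y_t − Y_s)_{t ≥ s} is independent of G_s. -/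
/-!
Write `F_t = σ(Y_u : u ≤ t)` and `I_t = σ(Y_u - Y_t : u ≥ t)`. Then `F_∞ = F_t ∨ I_t`, and
independence of each increment from the past gives `I_t ⫫ F_t`, by induction on finitely many
increments, peeling off the earliest one.

If `G_s ⫫ F_∞ | F_s`, then for `B ∈ I_s` the conditional probability `P(B | F_s) = P(B)` is
constant, and integrating the conditional product formula gives `P(A ∩ B) = P(A) P(B)`.

Conversely, if `I_t ⫫ G_t`, then `P(D | G_t) = P(D | F_t)` for every `D ∈ F_t ∨ I_t`: for fixed
`C ∈ G_t` the finite measures `D ↦ P(D ∩ C)` and `D ↦ E[1_D P(C | F_t)]` agree on the π-system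
of sets `a ∩ b` with `a ∈ F_t`, `b ∈ I_t`. Conditioning `1_A 1_B` first on `G_t` and then on
`F_t` turns this into the conditional independence.
-/

open MeasureTheory Filter Topology ProbabilityTheory
open scoped ENNReal

section SigmaAlgebra

variable {Ω : Type*}

lemma MeasurableSpace.sup_eq_generateFrom_image2_inter (m₁ m₂ : MeasurableSpace Ω) :
    m₁ ⊔ m₂ = generateFrom
      (Set.image2 (· ∩ ·) {s | MeasurableSet[m₁] s} {s | MeasurableSet[m₂] s}) := by
  refine le_antisymm (sup_le (fun a ha => ?_) (fun b hb => ?_)) (generateFrom_le ?_)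
  · exact measurableSet_generateFrom ⟨a, ha, Set.univ, .univ, Set.inter_univ a⟩
  · exact measurableSet_generateFrom ⟨Set.univ, .univ, b, hb, Set.univ_inter b⟩
  · rintro _ ⟨a, ha, b, hb, rfl⟩
    exact (le_sup_left (b := m₂) a ha).inter (le_sup_right (a := m₁) b hb)

lemma isPiSystem_image2_inter (m₁ m₂ : MeasurableSpace Ω) :
    IsPiSystem (Set.image2 (· ∩ ·) {s | MeasurableSet[m₁] s} {s | MeasurableSet[m₂] s}) := by
  rintro _ ⟨a₁, ha₁, b₁, hb₁, rfl⟩ _ ⟨a₂, ha₂, b₂, hb₂, rfl⟩ -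
  exact ⟨a₁ ∩ a₂, ha₁.inter ha₂, b₁ ∩ b₂, hb₁.inter hb₂, Set.inter_inter_inter_comm a₁ a₂ b₁ b₂⟩

variable {mΩ : MeasurableSpace Ω} {μ : Measure Ω} [IsProbabilityMeasure μ]
  {m₁ m₂ m₃ : MeasurableSpace Ω}

lemma ProbabilityTheory.Indep.sup_left_of_indep_sup (h₁ : m₁ ≤ mΩ) (h₂ : m₂ ≤ mΩ) (h₃ : m₃ ≤ mΩ)
    (h₁₃ : Indep m₁ m₃ μ) (h₂₁₃ : Indep m₂ (m₁ ⊔ m₃) μ) : Indep (m₁ ⊔ m₂) m₃ μ := by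
  refine IndepSets.indep (sup_le h₁ h₂) h₃ (isPiSystem_image2_inter m₁ m₂)
    (@MeasurableSpace.isPiSystem_measurableSet Ω m₃)
    (MeasurableSpace.sup_eq_generateFrom_image2_inter m₁ m₂)
    MeasurableSpace.generateFrom_measurableSet.symm ?_
  rw [IndepSets_iff]
  rintro _ c ⟨a, ha, b, hb, rfl⟩ hc
  rw [Indep_iff] at h₁₃ h₂₁₃
  calc μ (a ∩ b ∩ c) = μ (b ∩ (a ∩ c)) := by rw [Set.inter_assoc, Set.inter_left_comm]
    _ = μ b * (μ a * μ c) := by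
      rw [h₂₁₃ _ _ hb ((le_sup_left (b := m₃) a ha).inter (le_sup_right (a := m₁) c hc)),
        h₁₃ _ _ ha hc]
    _ = μ (a ∩ b) * μ c := by
      rw [Set.inter_comm a b, h₂₁₃ _ _ hb (le_sup_left (b := m₃) a ha), mul_assoc]

end SigmaAlgebra

section Increments

variable {Ω ι E : Type*} {mΩ : MeasurableSpace Ω} [mE : MeasurableSpace E]

lemma comap_add_le_sup [Add E] [MeasurableAdd₂ E] (f g : Ω → E) :
    MeasurableSpace.comap (fun ω => f ω + g ω) mE ≤
      MeasurableSpace.comap f mE ⊔ MeasurableSpace.comap g mE :=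
  Measurable.comap_le <| ((comap_measurable f).mono le_sup_left le_rfl).add
    ((comap_measurable g).mono le_sup_right le_rfl)

lemma comap_sub_le_sup [Sub E] [MeasurableSub₂ E] (f g : Ω → E) :
    MeasurableSpace.comap (fun ω => f ω - g ω) mE ≤
      MeasurableSpace.comap f mE ⊔ MeasurableSpace.comap g mE :=
  Measurable.comap_le <| ((comap_measurable f).mono le_sup_left le_rfl).sub
    ((comap_measurable g).mono le_sup_right le_rfl)

variable [LinearOrder ι]

abbrev pastSigma (Y : ι → Ω → E) (t : ι) : MeasurableSpace Ω :=
  ⨆ u, ⨆ _ : u ≤ t, MeasurableSpace.comap (Y u) mE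

abbrev incrementSigma [Sub E] (Y : ι → Ω → E) (s : ι) : MeasurableSpace Ω :=
  ⨆ t, ⨆ _ : s ≤ t, MeasurableSpace.comap (fun ω => Y t ω - Y s ω) mE

variable {Y : ι → Ω → E}

lemma comap_le_pastSigma {u t : ι} (h : u ≤ t) : MeasurableSpace.comap (Y u) mE ≤ pastSigma Y t :=
  le_iSup₂ (f := fun u (_ : u ≤ t) => MeasurableSpace.comap (Y u) mE) u h

lemma pastSigma_mono : Monotone (pastSigma Y) :=
  fun _ _ hst => iSup₂_le fun _ hu => comap_le_pastSigma (hu.trans hst)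

lemma pastSigma_le (hY : ∀ t, Measurable (Y t)) (t : ι) : pastSigma Y t ≤ mΩ :=
  iSup₂_le fun u _ => (hY u).comap_le

lemma comap_sub_le_pastSigma [Sub E] [MeasurableSub₂ E] {u v t : ι} (hu : u ≤ t) (hv : v ≤ t) :
    MeasurableSpace.comap (fun ω => Y u ω - Y v ω) mE ≤ pastSigma Y t :=
  (comap_sub_le_sup _ _).trans (sup_le (comap_le_pastSigma hu) (comap_le_pastSigma hv))

lemma comap_sub_le_incrementSigma [Sub E] {s t : ι} (h : s ≤ t) :
    MeasurableSpace.comap (fun ω => Y t ω - Y s ω) mE ≤ incrementSigma Y s :=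
  le_iSup₂ (f := fun t (_ : s ≤ t) => MeasurableSpace.comap (fun ω => Y t ω - Y s ω) mE) t h

lemma incrementSigma_le [Sub E] [MeasurableSub₂ E] (hY : ∀ t, Measurable (Y t)) (s : ι) :
    incrementSigma Y s ≤ mΩ :=
  iSup₂_le fun t _ => ((hY t).sub (hY s)).comap_le

abbrev incrementSigmaOn [Sub E] (Y : ι → Ω → E) (s : ι) (S : Finset ι) : MeasurableSpace Ω :=
  ⨆ u ∈ S, ⨆ _ : s ≤ u, MeasurableSpace.comap (fun ω => Y u ω - Y s ω) mE

lemma comap_sub_le_incrementSigmaOn [Sub E] {s u : ι} {S : Finset ι} (hu : u ∈ S) (hsu : s ≤ u) :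
    MeasurableSpace.comap (fun ω => Y u ω - Y s ω) mE ≤ incrementSigmaOn Y s S :=
  le_iSup₂_of_le (f := fun u (_ : u ∈ S) => ⨆ _ : s ≤ u,
      MeasurableSpace.comap (fun ω => Y u ω - Y s ω) mE) u hu
    (le_iSup (fun _ : s ≤ u => MeasurableSpace.comap (fun ω => Y u ω - Y s ω) mE) hsu)

lemma incrementSigmaOn_le [Sub E] [MeasurableSub₂ E] (hY : ∀ t, Measurable (Y t)) (s : ι)
    (S : Finset ι) : incrementSigmaOn Y s S ≤ mΩ :=
  iSup₂_le fun u _ => iSup_le fun _ => ((hY u).sub (hY s)).comap_le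

variable [AddGroup E] [MeasurableAdd₂ E] [MeasurableSub₂ E]

lemma iSup_comap_eq_pastSigma_sup_incrementSigma (Y : ι → Ω → E) (t : ι) :
    ⨆ u, MeasurableSpace.comap (Y u) mE = pastSigma Y t ⊔ incrementSigma Y t := by
  refine le_antisymm (iSup_le fun u => ?_) (sup_le ?_ ?_)
  · rcases le_total u t with h | h
    · exact (comap_le_pastSigma h).trans le_sup_left
    · calc MeasurableSpace.comap (Y u) mE
          = MeasurableSpace.comap (fun ω => (Y u ω - Y t ω) + Y t ω) mE := by
            simp only [sub_add_cancel]
        _ ≤ _ := (comap_add_le_sup _ _).trans <| sup_le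
            ((comap_sub_le_incrementSigma h).trans le_sup_right)
            ((comap_le_pastSigma le_rfl).trans le_sup_left)
  · exact iSup₂_le fun u _ => le_iSup (fun u => MeasurableSpace.comap (Y u) mE) u
  · exact iSup₂_le fun u _ => (comap_sub_le_sup _ _).trans (sup_le
      (le_iSup (fun u => MeasurableSpace.comap (Y u) mE) u)
      (le_iSup (fun u => MeasurableSpace.comap (Y u) mE) t))

variable {μ : Measure Ω} [IsProbabilityMeasure μ]

lemma indep_incrementSigmaOn_pastSigma [DecidableEq ι] (hY : ∀ t, Measurable (Y t))
    (hindep : ∀ s t, s ≤ t →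
      Indep (MeasurableSpace.comap (fun ω => Y t ω - Y s ω) mE) (pastSigma Y s) μ)
    (S : Finset ι) (s : ι) :
    Indep (incrementSigmaOn Y s S) (pastSigma Y s) μ := by
  induction S using Finset.induction_on_min generalizing s with
  | empty => simpa [incrementSigmaOn] using indep_bot_left (μ := μ) (pastSigma Y s)
  | insert a S hlt ih =>
    by_cases hsa : s ≤ a
    · refine indep_of_indep_of_le_left ((hindep s a hsa).sup_left_of_indep_sup
        ((hY a).sub (hY s)).comap_le
        (incrementSigmaOn_le hY a S) (pastSigma_le hY s)
        (indep_of_indep_of_le_right (ih a)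
          (sup_le (comap_sub_le_pastSigma le_rfl hsa) (pastSigma_mono hsa)))) ?_
      refine iSup₂_le fun u hu => iSup_le fun hsu => ?_
      rcases Finset.mem_insert.1 hu with rfl | huS
      · exact le_sup_left
      calc MeasurableSpace.comap (fun ω => Y u ω - Y s ω) mE
          = MeasurableSpace.comap (fun ω => (Y u ω - Y a ω) + (Y a ω - Y s ω)) mE := by
            simp only [sub_add_sub_cancel]
        _ ≤ _ := (comap_add_le_sup _ _).trans <| sup_le
            (le_sup_of_le_right (comap_sub_le_incrementSigmaOn huS (hlt u huS).le))
            le_sup_left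
    · refine indep_of_indep_of_le_left (ih s) (iSup₂_le fun u hu => iSup_le fun hsu => ?_)
      rcases Finset.mem_insert.1 hu with rfl | huS
      · exact absurd hsu hsa
      · exact comap_sub_le_incrementSigmaOn huS hsu

lemma indep_incrementSigma_pastSigma (hY : ∀ t, Measurable (Y t))
    (hindep : ∀ s t, s ≤ t →
      Indep (MeasurableSpace.comap (fun ω => Y t ω - Y s ω) mE) (pastSigma Y s) μ) (s : ι) :
    Indep (incrementSigma Y s) (pastSigma Y s) μ := by
  classical
  rw [incrementSigma, iSup_eq_iSup_finset]
  exact indep_iSup_of_monotone (indep_incrementSigmaOn_pastSigma hY hindep · s)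
    (incrementSigmaOn_le hY s) (pastSigma_le hY s)
    fun _ _ hST => biSup_mono fun _ => Finset.mem_of_subset hST

end Increments

section CondExp

variable {Ω : Type*} {m mΩ : MeasurableSpace Ω} {μ : Measure Ω}

lemma indicator_one_mul_eq_indicator (A : Set Ω) (g : Ω → ℝ) :
    A.indicator (fun _ => (1 : ℝ)) * g = A.indicator g := by
  ext x
  by_cases hx : x ∈ A <;> simp [hx]

lemma condExp_indicator_nonneg (C : Set Ω) : 0 ≤ᵐ[μ] μ[C.indicator (fun _ => (1 : ℝ)) | m] :=
  condExp_nonneg (.of_forall (Set.indicator_nonneg fun _ _ => zero_le_one))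

variable [IsFiniteMeasure μ]

lemma setIntegral_condExp_eq_integral_condExp_indicator_mul_s17 (hm : m ≤ mΩ) (f : Ω → ℝ)
    {C : Set Ω} (hC : MeasurableSet C) :
    ∫ x in C, μ[f | m] x ∂μ = ∫ x, μ[C.indicator (fun _ => (1 : ℝ)) | m] x * μ[f | m] x ∂μ := by
  have hint : Integrable (C.indicator (fun _ => (1 : ℝ)) * μ[f | m]) μ := by
    rw [indicator_one_mul_eq_indicator]
    exact integrable_condExp.indicator hC
  calc ∫ x in C, μ[f | m] x ∂μ
      = ∫ x, (C.indicator (fun _ => (1 : ℝ)) * μ[f | m]) x ∂μ := by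
        rw [indicator_one_mul_eq_indicator, integral_indicator hC]
    _ = ∫ x, μ[C.indicator (fun _ => (1 : ℝ)) * μ[f | m] | m] x ∂μ := (integral_condExp hm).symm
    _ = ∫ x, μ[C.indicator (fun _ => (1 : ℝ)) | m] x * μ[f | m] x ∂μ :=
        integral_congr_ae (condExp_mul_of_stronglyMeasurable_right stronglyMeasurable_condExp hint
          ((integrable_const 1).indicator hC))

lemma setIntegral_condExp_indicator_comm (hm : m ≤ mΩ) {B C : Set Ω} (hB : MeasurableSet B)
    (hC : MeasurableSet C) :
    ∫ x in C, μ[B.indicator (fun _ => (1 : ℝ)) | m] x ∂μ =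
      ∫ x in B, μ[C.indicator (fun _ => (1 : ℝ)) | m] x ∂μ := by
  rw [setIntegral_condExp_eq_integral_condExp_indicator_mul_s17 hm _ hC,
    setIntegral_condExp_eq_integral_condExp_indicator_mul_s17 hm _ hB]
  simp_rw [mul_comm]

lemma setLIntegral_ofReal_condExp_indicator (hm : m ≤ mΩ) {a C : Set Ω}
    (ha : MeasurableSet[m] a) (hC : MeasurableSet C) :
    ∫⁻ x in a, ENNReal.ofReal (μ[C.indicator (fun _ => (1 : ℝ)) | m] x) ∂μ = μ (a ∩ C) := by
  rw [← ofReal_integral_eq_lintegral_ofReal integrable_condExp.restrict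
      (ae_restrict_of_ae (condExp_indicator_nonneg C)),
    setIntegral_condExp hm ((integrable_const 1).indicator hC) ha, setIntegral_indicator hC,
    setIntegral_const, smul_eq_mul, mul_one, ofReal_measureReal]

variable {F G H I : MeasurableSpace Ω}

lemma measure_inter_eq_setLIntegral_condExp_of_indep (hFG : F ≤ G) (hG : G ≤ mΩ) (hI : I ≤ mΩ)
    (hIG : Indep I G μ) {C D : Set Ω} (hC : MeasurableSet[G] C) (hD : MeasurableSet[F ⊔ I] D) :
    μ (D ∩ C) = ∫⁻ x in D, ENNReal.ofReal (μ[C.indicator (fun _ => (1 : ℝ)) | F] x) ∂μ := by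
  have hF := hFG.trans hG
  have hCm := hG _ hC
  set h := fun x => ENNReal.ofReal (μ[C.indicator (fun _ => (1 : ℝ)) | F] x)
  rw [← Measure.restrict_apply (sup_le hF hI _ hD), ← withDensity_apply _ (sup_le hF hI _ hD)]
  refine ext_on_measurableSpace_of_generate_finite mΩ _ ?_ (sup_le hF hI)
    (MeasurableSpace.sup_eq_generateFrom_image2_inter F I) (isPiSystem_image2_inter F I) ?_ hD
  · rintro _ ⟨a, ha, b, hb, rfl⟩
    have hab := (hF _ ha).inter (hI _ hb)
    have hIG' := (Indep_iff _ _ _).1 hIG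
    rw [Measure.restrict_apply hab, withDensity_apply _ hab]
    calc μ (a ∩ b ∩ C) = μ (b ∩ (a ∩ C)) := by rw [Set.inter_right_comm, Set.inter_comm]
      _ = μ b * ∫⁻ x in a, h x ∂μ := by
        rw [hIG' _ _ hb ((hFG _ ha).inter hC), setLIntegral_ofReal_condExp_indicator hF ha hCm]
      _ = ∫⁻ x, b.indicator (1 : Ω → ℝ≥0∞) x * a.indicator h x ∂μ := by
        have hb1 : Measurable[I] (b.indicator (1 : Ω → ℝ≥0∞)) := measurable_one.indicator hb
        have hah : Measurable[G] (a.indicator h) :=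
          (ENNReal.measurable_ofReal.comp
            (stronglyMeasurable_condExp.mono hFG).measurable).indicator (hFG _ ha)
        rw [lintegral_mul_eq_lintegral_mul_lintegral_of_independent_measurableSpace
          hI hG hIG hb1 hah, lintegral_indicator_one (hI _ hb), lintegral_indicator (hF _ ha)]
      _ = ∫⁻ x in a ∩ b, h x ∂μ := by
        rw [← lintegral_indicator hab]
        refine lintegral_congr fun x => ?_
        by_cases hxa : x ∈ a <;> by_cases hxb : x ∈ b <;> simp [hxa, hxb]
  · rw [Measure.restrict_apply .univ, withDensity_apply _ .univ,
      setLIntegral_ofReal_condExp_indicator hF MeasurableSet.univ hCm]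

lemma condExp_indicator_ae_eq_of_indep (hFG : F ≤ G) (hG : G ≤ mΩ) (hI : I ≤ mΩ)
    (hIG : Indep I G μ) {D : Set Ω} (hD : MeasurableSet[F ⊔ I] D) :
    μ[D.indicator (fun _ => (1 : ℝ)) | G] =ᵐ[μ] μ[D.indicator (fun _ => (1 : ℝ)) | F] := by
  have hF := hFG.trans hG
  have hDm := sup_le hF hI _ hD
  refine (ae_eq_condExp_of_forall_setIntegral_eq hG ((integrable_const 1).indicator hDm)
    (fun _ _ _ => integrable_condExp.integrableOn) (fun C hC _ => ?_)
    (stronglyMeasurable_condExp.mono hFG).aestronglyMeasurable).symm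
  have hCm := hG _ hC
  rw [setIntegral_condExp_indicator_comm hF hDm hCm,
    integral_eq_lintegral_of_nonneg_ae (ae_restrict_of_ae (condExp_indicator_nonneg C))
      integrable_condExp.aestronglyMeasurable.restrict,
    ← measure_inter_eq_setLIntegral_condExp_of_indep hFG hG hI hIG hC hD,
    setIntegral_indicator hDm, setIntegral_const, smul_eq_mul, mul_one, Set.inter_comm,
    measureReal_def]

lemma condIndepGiven_of_forall_condExp_indicator_ae_eq (hFG : F ≤ G) (hG : G ≤ mΩ)
    (hH : H ≤ mΩ) (h : ∀ D, MeasurableSet[H] D →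
      μ[D.indicator (fun _ => (1 : ℝ)) | G] =ᵐ[μ] μ[D.indicator (fun _ => (1 : ℝ)) | F]) :
    CondIndepGiven μ G H F := by
  intro A B hA hB
  have hAm := hG _ hA
  have hBm := hH _ hB
  have hint {g : Ω → ℝ} (hg : Integrable g μ) :
      Integrable (A.indicator (fun _ => (1 : ℝ)) * g) μ := by
    rw [indicator_one_mul_eq_indicator]
    exact hg.indicator hAm
  have hAB : (A ∩ B).indicator (fun _ => (1 : ℝ)) =
      A.indicator (fun _ => (1 : ℝ)) * B.indicator (fun _ => (1 : ℝ)) := Set.inter_indicator_one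
  rw [hAB]
  calc μ[A.indicator (fun _ => (1 : ℝ)) * B.indicator (fun _ => (1 : ℝ)) | F]
      =ᵐ[μ] μ[μ[A.indicator (fun _ => (1 : ℝ)) * B.indicator (fun _ => (1 : ℝ)) | G] | F] :=
        (condExp_condExp_of_le hFG hG).symm
    _ =ᵐ[μ] μ[A.indicator (fun _ => (1 : ℝ)) * μ[B.indicator (fun _ => (1 : ℝ)) | G] | F] :=
        condExp_congr_ae (condExp_mul_of_stronglyMeasurable_left
          (stronglyMeasurable_const.indicator hA) (hint ((integrable_const 1).indicator hBm))
          ((integrable_const 1).indicator hBm))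
    _ =ᵐ[μ] μ[A.indicator (fun _ => (1 : ℝ)) * μ[B.indicator (fun _ => (1 : ℝ)) | F] | F] :=
        condExp_congr_ae (EventuallyEq.rfl.mul (h B hB))
    _ =ᵐ[μ] μ[A.indicator (fun _ => (1 : ℝ)) | F] * μ[B.indicator (fun _ => (1 : ℝ)) | F] :=
        condExp_mul_of_stronglyMeasurable_right stronglyMeasurable_condExp
          (hint integrable_condExp) ((integrable_const 1).indicator hAm)

lemma condIndepGiven_sup_of_indep (hFG : F ≤ G) (hG : G ≤ mΩ) (hI : I ≤ mΩ)
    (hIG : Indep I G μ) : CondIndepGiven μ G (F ⊔ I) F :=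
  condIndepGiven_of_forall_condExp_indicator_ae_eq hFG hG (sup_le (hFG.trans hG) hI)
    fun _ hD => condExp_indicator_ae_eq_of_indep hFG hG hI hIG hD

lemma indep_of_condIndepGiven (hF : F ≤ mΩ) (hG : G ≤ mΩ) (hI : I ≤ mΩ) (hIH : I ≤ H)
    (hcond : CondIndepGiven μ G H F) (hIF : Indep I F μ) : Indep I G μ := by
  rw [Indep_iff]
  intro B A hB hA
  have hBm := hI _ hB
  have hAm := hG _ hA
  have hB_const : μ[B.indicator (fun _ => (1 : ℝ)) | F] =ᵐ[μ] fun _ => μ.real B := by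
    simpa [integral_indicator_const _ hBm] using
      condExp_indep_eq hI hF ((stronglyMeasurable_const (b := (1 : ℝ))).indicator hB) hIF
  have h := integral_congr_ae ((hcond A B hA (hIH _ hB)).trans (EventuallyEq.rfl.mul hB_const))
  simp only [Pi.mul_apply] at h
  rw [integral_condExp hF, integral_mul_const, integral_condExp hF,
    integral_indicator_const _ (hAm.inter hBm), integral_indicator_const _ hAm] at h
  simp only [smul_eq_mul, mul_one] at h
  rw [Set.inter_comm, ← ENNReal.toReal_eq_toReal_iff' (measure_ne_top _ _)
    (ENNReal.mul_ne_top (measure_ne_top _ _) (measure_ne_top _ _)), ENNReal.toReal_mul]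
  simpa [measureReal_def, mul_comm] using h

end CondExp

theorem stmt17_general {Ω E : Type*} {mΩ : MeasurableSpace Ω}
    [AddCommGroup E] [TopologicalSpace E] [IsTopologicalAddGroup E] [PolishSpace E]
    [mE : MeasurableSpace E] [BorelSpace E]
    (μ : Measure Ω) [IsProbabilityMeasure μ]
    (Y : NNReal → Ω → E) (hYm : ∀ t, Measurable (Y t))
    (hindep : ∀ s t : NNReal, s ≤ t →
      ProbabilityTheory.Indep
        (MeasurableSpace.comap (fun ω => Y t ω - Y s ω) mE)
        (⨆ u : NNReal, ⨆ _ : u ≤ s, MeasurableSpace.comap (Y u) mE) μ)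
    (G : Filtration NNReal mΩ)
    (hFG : ∀ t, (⨆ u : NNReal, ⨆ _ : u ≤ t, MeasurableSpace.comap (Y u) mE) ≤ G t) :
    (∀ t, CondIndepGiven μ (G t)
        (⨆ u : NNReal, MeasurableSpace.comap (Y u) mE)
        (⨆ u : NNReal, ⨆ _ : u ≤ t, MeasurableSpace.comap (Y u) mE)) ↔
    (∀ s : NNReal,
      ProbabilityTheory.Indep
        (⨆ t : NNReal, ⨆ _ : s ≤ t, MeasurableSpace.comap (fun ω => Y t ω - Y s ω) mE)
        (G s) μ) := by
  have hsplit := iSup_comap_eq_pastSigma_sup_incrementSigma Y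
  constructor
  · intro hcond s
    exact indep_of_condIndepGiven (pastSigma_le hYm s) (G.le s) (incrementSigma_le hYm s)
      (le_sup_right.trans (hsplit s).ge) (hcond s) (indep_incrementSigma_pastSigma hYm hindep s)
  · intro hincr t
    rw [hsplit t]
    exact condIndepGiven_sup_of_indep (hFG t) (G.le t) (incrementSigma_le hYm t) (hincr t)

/-- Characterization (vi) of compatibility: for a càdlàg process `Y` with independent
increments taking values in a separable Fréchet space (a Polish locally convex space) and
a filtration `G ⊇ F^Y`, immersion of `F^Y` in `G` is equivalent to the increments
`(Y_t − Y_s)_{t ≥ s}` being independent of `G_s` for every `s`. -/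
theorem stmt17 {Ω E : Type*} {mΩ : MeasurableSpace Ω}
    [AddCommGroup E] [Module ℝ E] [TopologicalSpace E] [IsTopologicalAddGroup E]
    [ContinuousSMul ℝ E] [LocallyConvexSpace ℝ E] [PolishSpace E]
    [mE : MeasurableSpace E] [BorelSpace E]
    (μ : Measure Ω) [IsProbabilityMeasure μ]
    (Y : NNReal → Ω → E) (hYm : ∀ t, Measurable (Y t))
    (hcadlag : ∀ ω,
      (∀ t, ContinuousWithinAt (fun s => Y s ω) (Set.Ici t) t) ∧
      (∀ t : NNReal, 0 < t → ∃ L, Tendsto (fun s => Y s ω) (nhdsWithin t (Set.Iio t)) (𝓝 L)))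
    (hindep : ∀ s t : NNReal, s ≤ t →
      ProbabilityTheory.Indep
        (MeasurableSpace.comap (fun ω => Y t ω - Y s ω) mE)
        (⨆ u : NNReal, ⨆ _ : u ≤ s, MeasurableSpace.comap (Y u) mE) μ)
    (G : Filtration NNReal mΩ)
    (hFG : ∀ t, (⨆ u : NNReal, ⨆ _ : u ≤ t, MeasurableSpace.comap (Y u) mE) ≤ G t) :
    (∀ t, CondIndepGiven μ (G t)
        (⨆ u : NNReal, MeasurableSpace.comap (Y u) mE)
        (⨆ u : NNReal, ⨆ _ : u ≤ t, MeasurableSpace.comap (Y u) mE)) ↔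
    (∀ s : NNReal,
      ProbabilityTheory.Indep
        (⨆ t : NNReal, ⨆ _ : s ≤ t, MeasurableSpace.comap (fun ω => Y t ω - Y s ω) mE)
        (G s) μ) :=
  stmt17_general (mE := mE) μ Y hYm hindep G hFG
end
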